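/- arXiv:2301.09730 — 6 statements merged into one kernel-verified Lean document; each statement's English description precedes it below -/
import Mathlib

section
/- Let b = −n+i with n ≥ 2, and suppose x and y are two distinct radix expansions in base b of the same complex number, with digits in Λ_b = {0,...,n²}. If k is the largest index at which the digits x_k and y_k differ for the first time (reading from the most significant digit), then x_k − y_k = ±1. -/
open Filter Topology

private lemma gilbert_abs_le (a b : ℤ) (hb : 0 ≤ b) (h : a^2 < (b+1)^2) : |a| ≤ b := by
  by_contra hc
  push_neg at hc
  have h1 : b + 1 ≤ |a| := hc
  nlinarith [sq_abs a, abs_nonneg a]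

private lemma gilbert_le_abs (a b : ℤ) (h : b^2 ≤ a^2) (hb : 0 ≤ b) : b ≤ |a| := by
  by_contra hc
  push_neg at hc
  nlinarith [sq_abs a, abs_nonneg a]

/-- The combinatorial core: with `B = n²+2n+3`, no bounded `b`-orbit with real-integer
increments can start at a real integer `d` with `d² ≥ 4`. -/
private lemma gilbert_int_core (n d e1 p1 q2 p2 q3 : ℤ) (hn : 2 ≤ n) (hd : 4 ≤ d^2)
    (he1 : e1^2 ≤ (n^2)^2)
    (hp1 : p1 = -n*d + e1)
    (hq2 : q2 = p1 - n*d) (hq3 : q3 = p2 - n*q2)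
    (h1 : p1^2 + d^2 ≤ n^2+2*n+3) (h2 : p2^2 + q2^2 ≤ n^2+2*n+3)
    (h3 : q3^2 ≤ n^2+2*n+3) : False := by
  have hd2 : 2 ≤ |d| := gilbert_le_abs d 2 (by nlinarith) (by norm_num)
  rcases eq_or_lt_of_le hn with h2n | h3n
  · have hn2 : n = 2 := h2n.symm
    subst hn2
    have he : |e1| ≤ 4 := gilbert_abs_le e1 4 (by norm_num) (by nlinarith)
    have hq2v : q2 = e1 - 4*d := by rw [hq2, hp1]; ring
    have h4 : (4:ℤ) ≤ |q2| := by
      have hh := abs_sub_abs_le_abs_sub (4*d) e1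
      have h4d : |4*d| = 4*|d| := by rw [abs_mul]; norm_num
      have hh2 : 4*|d| - |e1| ≤ |4*d - e1| := by rw [← h4d]; exact hh
      have habs : |4*d - e1| = |q2| := by rw [hq2v, abs_sub_comm]
      omega
    nlinarith [sq_abs q2, abs_nonneg q2]
  · have hn3 : 3 ≤ n := h3n
    have hp1b : |p1| ≤ n := gilbert_abs_le p1 n (by linarith) (by nlinarith)
    have hq2b : n ≤ |q2| := by
      have h1' := abs_sub_abs_le_abs_sub (n*d) p1
      have hnd : |n*d| = n*|d| := by rw [abs_mul, abs_of_nonneg (by linarith : (0:ℤ) ≤ n)]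
      have habs : |n*d - p1| = |q2| := by rw [hq2, abs_sub_comm]
      have : n*2 ≤ n*|d| := by nlinarith
      omega
    have hq2sq : n^2 ≤ q2^2 := by nlinarith [sq_abs q2, abs_nonneg q2]
    have hp2b : p2^2 ≤ 2*n+3 := by linarith
    have hq3b : |q3| ≤ n+1 := gilbert_abs_le q3 (n+1) (by linarith) (by nlinarith)
    have hq3lb : n*n - |p2| ≤ |q3| := by
      have h1' := abs_sub_abs_le_abs_sub (n*q2) p2
      have hnq : |n*q2| = n*|q2| := by rw [abs_mul, abs_of_nonneg (by linarith : (0:ℤ) ≤ n)]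
      have habs : |n*q2 - p2| = |q3| := by rw [hq3, abs_sub_comm]
      have : n*n ≤ n*|q2| := by nlinarith
      omega
    have hp2lb : n*n - n - 1 ≤ |p2| := by omega
    have hnn : 3*n ≤ n*n := mul_le_mul_of_nonneg_right hn3 (by linarith)
    have h5 : 5 ≤ n*n - n - 1 := by linarith
    have hA : (0:ℤ) ≤ n*n-n-1 := by linarith
    have hsq : (n*n - n - 1)^2 ≤ p2^2 := by
      have := pow_le_pow_left₀ hA hp2lb 2
      rwa [sq_abs] at this
    have h5' : (n*n-n-1)*5 ≤ (n*n-n-1)*(n*n-n-1) := mul_le_mul_of_nonneg_left h5 hA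
    have hsq' : (n*n-n-1)*(n*n-n-1) = (n*n-n-1)^2 := (sq (n*n-n-1)).symm
    linarith

/-- Orbit of partial "carry" Gaussian integers: `P 0 = (e 0, 0)`,
`P (m+1) = (-n p - q + e (m+1), p - n q)`. -/
private def gilbertP (n : ℤ) (e : ℕ → ℤ) : ℕ → ℤ × ℤ
  | 0 => (e 0, 0)
  | m+1 => (-n * (gilbertP n e m).1 - (gilbertP n e m).2 + e (m+1),
      (gilbertP n e m).1 - n * (gilbertP n e m).2)

set_option maxHeartbeats 1000000 in
/-- Gilbert's first-difference lemma: if `x` and `y` are two distinct radix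
expansions in base `b = -n + i` (`n ≥ 2`) of the same complex number, with
digits in `{0,…,n²}` and finitely many nonzero digits to the left, and `k`
is the largest index at which their digits differ, then `x_k - y_k = ±1`. -/
theorem stmt4 (n : ℕ) (hn : 2 ≤ n) (x y : ℤ → ℕ)
    (hx : ∀ k, x k ≤ n ^ 2) (hy : ∀ k, y k ≤ n ^ 2)
    (hxfin : ∃ L : ℤ, ∀ k, L < k → x k = 0)
    (hyfin : ∃ L : ℤ, ∀ k, L < k → y k = 0)
    (hne : x ≠ y)
    (heq : ∑' k : ℤ, (x k : ℂ) * (-(n : ℂ) + Complex.I) ^ k =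
      ∑' k : ℤ, (y k : ℂ) * (-(n : ℂ) + Complex.I) ^ k)
    (k : ℤ) (hk : x k ≠ y k) (hmax : ∀ j : ℤ, k < j → x j = y j) :
    (x k : ℤ) - (y k : ℤ) = 1 ∨ (x k : ℤ) - (y k : ℤ) = -1 := by
  classical
  by_contra hcon
  push_neg at hcon
  set b : ℂ := -(n:ℂ) + Complex.I with hbdef
  set r : ℝ := Real.sqrt ((n:ℝ)^2+1) with hrdef
  have hnorm : ‖b‖ = r := by
    rw [hbdef, hrdef]
    rw [Complex.norm_def]
    congr 1
    rw [Complex.normSq_apply]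
    simp
    ring
  have hn1 : (2:ℝ) ≤ (n:ℝ) := by exact_mod_cast hn
  have hr1 : 1 < r := by
    rw [hrdef]
    have h1 : (1:ℝ) < (n:ℝ)^2+1 := by nlinarith
    calc (1:ℝ) = Real.sqrt 1 := Real.sqrt_one.symm
    _ < _ := Real.sqrt_lt_sqrt (by norm_num) h1
  have hrpos : (0:ℝ) < r := lt_trans one_pos hr1
  have hb0 : b ≠ 0 := by
    intro h
    rw [h, norm_zero] at hnorm
    linarith [hnorm ▸ hrpos]
  have hrinv : r⁻¹ < 1 := by rw [inv_lt_one_iff₀]; right; exact hr1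
  have hrinv0 : (0:ℝ) ≤ r⁻¹ := by positivity
  have hr_le : r ≤ (n:ℝ) + 1/2 := by
    rw [hrdef]
    have h1 : (n:ℝ)^2 + 1 ≤ ((n:ℝ)+1/2)^2 := by nlinarith
    calc Real.sqrt ((n:ℝ)^2+1) ≤ Real.sqrt (((n:ℝ)+1/2)^2) := Real.sqrt_le_sqrt h1
    _ = (n:ℝ)+1/2 := Real.sqrt_sq (by positivity)
  have hr_sq : r^2 = (n:ℝ)^2 + 1 := Real.sq_sqrt (by positivity)
  -- summability
  have hsum : ∀ z : ℤ → ℕ, (∀ j, z j ≤ n^2) → (∃ L, ∀ j, L < j → z j = 0) →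
      Summable (fun j : ℤ => (z j : ℂ) * b ^ j) := by
    rintro z hzb ⟨L, hL⟩
    have hinj : Function.Injective (fun t : ℕ => L - (t:ℤ)) := by
      intro a c h; simpa using h
    have hvanish : ∀ j, j ∉ Set.range (fun t : ℕ => L - (t:ℤ)) →
        (z j : ℂ) * b ^ j = 0 := by
      intro j hj
      have hLj : L < j := by
        by_contra hc
        push_neg at hc
        exact hj ⟨(L - j).toNat, by show L - ((L - j).toNat : ℤ) = j; omega⟩
      simp [hL j hLj]
    rw [← Function.Injective.summable_iff hinj hvanish]
    apply Summable.of_norm_bounded (g := fun t : ℕ => (n:ℝ)^2 * r ^ (L:ℤ) * r⁻¹ ^ t)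
    · exact ((summable_geometric_of_lt_one (by positivity) hrinv).mul_left _)
    · intro t
      have h1 : ‖(z (L - t) : ℂ) * b ^ ((L:ℤ) - t)‖ = (z (L - t) : ℝ) * r ^ ((L:ℤ) - t) := by
        simp only [norm_mul, norm_zpow, hnorm, Complex.norm_natCast]
      rw [Function.comp_apply, h1]
      have hzle : (z (L - t) : ℝ) ≤ (n:ℝ)^2 := by exact_mod_cast hzb (L - t)
      have hpow : r ^ ((L:ℤ) - t) = r ^ (L:ℤ) * r⁻¹ ^ t := by
        rw [zpow_sub₀ (ne_of_gt hrpos), zpow_natCast, div_eq_mul_inv, inv_pow]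
      rw [hpow, ← mul_assoc]
      apply mul_le_mul_of_nonneg_right _ (by positivity)
      apply mul_le_mul_of_nonneg_right hzle (by positivity)
  have hgx := hsum x hx hxfin
  have hgy := hsum y hy hyfin
  -- the difference series
  set D : ℤ → ℤ := fun j => (x j : ℤ) - (y j : ℤ) with hD
  set g : ℤ → ℂ := fun j => (D j : ℂ) * b ^ j with hg
  have hgfun : g = fun j => (x j : ℂ) * b ^ j - (y j : ℂ) * b ^ j := by
    funext j
    rw [hg, hD]
    push_cast
    ring
  have hgs : Summable g := by rw [hgfun]; exact hgx.sub hgy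
  have hgt : ∑' j : ℤ, g j = 0 := by
    rw [hgfun, Summable.tsum_sub hgx hgy, heq, sub_self]
  have hDtop : ∀ j, k < j → D j = 0 := by
    intro j hj; rw [hD]; simp [hmax j hj]
  have hDb : ∀ j, |D j| ≤ (n:ℤ)^2 := by
    intro j
    have h1 : (x j : ℤ) ≤ (n:ℤ)^2 := by exact_mod_cast hx j
    have h2 : (y j : ℤ) ≤ (n:ℤ)^2 := by exact_mod_cast hy j
    have h3 : (0:ℤ) ≤ (x j : ℤ) := Int.natCast_nonneg _
    have h4 : (0:ℤ) ≤ (y j : ℤ) := Int.natCast_nonneg _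
    rw [hD, abs_le]
    constructor <;> simp only <;> linarith
  -- reindex to ℕ
  set F : ℕ → ℂ := fun t => (D (k - t) : ℂ) * b ^ (k - (t:ℤ)) with hF
  have hinjk : Function.Injective (fun t : ℕ => k - (t:ℤ)) := by
    intro a c h; simpa using h
  have hFs : Summable F := by
    have := hgs.comp_injective hinjk
    exact this
  have hFt : ∑' t : ℕ, F t = 0 := by
    rw [← hgt]
    show ∑' t : ℕ, g (k - (t:ℤ)) = ∑' j : ℤ, g j
    apply Function.Injective.tsum_eq hinjk
    intro j hj
    simp only [Function.mem_support, Ne] at hj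
    by_contra hr
    apply hj
    have hkj : k < j := by
      by_contra hc
      push_neg at hc
      exact hr ⟨(k - j).toNat, by show k - ((k - j).toNat : ℤ) = j; omega⟩
    rw [hg]
    simp [hDtop j hkj]
  -- the key per-step norm bound on partial sums
  have hkey : ∀ m : ℕ, ‖∑ t ∈ Finset.range (m+1), F t‖ ≤
      (n:ℝ)^2 * r ^ (k - (m:ℤ) - 1) * (1 - r⁻¹)⁻¹ := by
    intro m
    have hsplit := Summable.sum_add_tsum_nat_add (f := F) (m+1) hFs
    rw [hFt] at hsplit
    have hsum_eq : ∑ t ∈ Finset.range (m+1), F t = -∑' t : ℕ, F (t + (m+1)) := by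
      linear_combination hsplit
    rw [hsum_eq, norm_neg]
    have hgeo : HasSum (fun t : ℕ => ((n:ℝ)^2 * r ^ (k - (m:ℤ) - 1)) * r⁻¹ ^ t)
        (((n:ℝ)^2 * r ^ (k - (m:ℤ) - 1)) * (1 - r⁻¹)⁻¹) :=
      (hasSum_geometric_of_lt_one hrinv0 hrinv).mul_left _
    apply tsum_of_norm_bounded hgeo
    intro t
    have h1 : ‖F (t + (m+1))‖ = |(D (k - (t + (m+1)) : ℤ))| * r ^ (k - ((t:ℤ) + (m+1))) := by
      rw [hF]
      simp only [norm_mul, norm_zpow, hnorm]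
      rw [Complex.norm_intCast]
      push_cast
      ring_nf
    rw [h1]
    have hpow : r ^ (k - ((t:ℤ) + (m+1))) = r ^ (k - (m:ℤ) - 1) * r⁻¹ ^ t := by
      rw [show k - ((t:ℤ) + (m+1)) = (k - (m:ℤ) - 1) - (t:ℤ) by push_cast; ring,
        zpow_sub₀ (ne_of_gt hrpos), zpow_natCast, div_eq_mul_inv, inv_pow]
    rw [hpow, ← mul_assoc]
    apply mul_le_mul_of_nonneg_right _ (by positivity)
    apply mul_le_mul_of_nonneg_right _ (by positivity)
    exact_mod_cast hDb (k - ((t:ℤ) + ((m:ℤ)+1)))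
  -- the orbit of partial Gaussian-integer sums
  set E : ℕ → ℤ := fun t => D (k - t) with hE
  set P : ℕ → ℤ × ℤ := gilbertP (n:ℤ) E with hP
  have hPT : ∀ m : ℕ, (((P m).1 : ℂ) + ((P m).2 : ℂ) * Complex.I) * b ^ (k - (m:ℤ)) =
      ∑ t ∈ Finset.range (m+1), F t := by
    intro m
    induction m with
    | zero =>
      rw [Finset.range_one, Finset.sum_singleton]
      have h0 : P 0 = (D k, 0) := by
        show gilbertP (n:ℤ) E 0 = _
        simp only [gilbertP, hE]
        norm_num
      rw [h0]
      have hF0 : F 0 = (D k : ℂ) * b ^ (k - ((0:ℕ):ℤ)) := by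
        simp only [hF]
        norm_num
      rw [hF0]
      push_cast
      ring
    | succ m ih =>
      rw [Finset.sum_range_succ, ← ih]
      have hstep : ((P (m+1)).1 : ℂ) + ((P (m+1)).2 : ℂ) * Complex.I =
          ((((P m).1 : ℂ) + ((P m).2 : ℂ) * Complex.I)) * b + (E (m+1) : ℂ) := by
        show ((gilbertP (n:ℤ) E (m+1)).1 : ℂ) + ((gilbertP (n:ℤ) E (m+1)).2 : ℂ) * Complex.I = _
        simp only [gilbertP, hbdef]
        push_cast
        apply Complex.ext <;> simp <;> ring
      rw [hstep]
      have hzp : b ^ (k - ((m:ℤ)+1)) * b = b ^ (k - (m:ℤ)) := by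
        rw [← zpow_add_one₀ hb0]
        congr 1
        ring
      have hcast : ((m+1 : ℕ) : ℤ) = (m:ℤ)+1 := by push_cast; ring
      have hFm : F (m+1) = (E (m+1) : ℂ) * b ^ (k - ((m:ℤ)+1)) := by
        simp only [hF, hE]
        push_cast
        ring
      rw [hFm, hcast]
      calc ((((P m).1 : ℂ) + ((P m).2 : ℂ) * Complex.I) * b + (E (m+1) : ℂ))
            * b ^ (k - ((m:ℤ)+1))
          = (((P m).1 : ℂ) + ((P m).2 : ℂ) * Complex.I) * (b ^ (k - ((m:ℤ)+1)) * b)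
            + (E (m+1) : ℂ) * b ^ (k - ((m:ℤ)+1)) := by ring
        _ = _ := by rw [hzp]
  -- the bound on the orbit
  have hB : ∀ m : ℕ, ((P m).1)^2 + ((P m).2)^2 ≤ (n:ℤ)^2 + 2*n + 3 := by
    intro m
    have h1 := hkey m
    rw [← hPT m, norm_mul, norm_zpow, hnorm] at h1
    have hr0 : r ≠ 0 := ne_of_gt hrpos
    have hr1' : r - 1 ≠ 0 := by intro h; nlinarith
    have hC : (n:ℝ)^2 * r ^ (k - (m:ℤ) - 1) * (1 - r⁻¹)⁻¹ = (r+1) * r ^ (k - (m:ℤ)) := by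
      have hn2 : (n:ℝ)^2 = (r-1)*(r+1) := by nlinarith
      have hinv : (1 - r⁻¹)⁻¹ = r/(r-1) := by
        rw [show 1 - r⁻¹ = (r-1)/r by field_simp]
        rw [inv_div]
      rw [hn2, hinv, show k - (m:ℤ) = (k - (m:ℤ) - 1) + 1 by ring, zpow_add_one₀ hr0]
      field_simp
      ring
    rw [hC] at h1
    have hzp0 : (0:ℝ) < r ^ (k - (m:ℤ)) := zpow_pos hrpos _
    have hw : ‖((P m).1 : ℂ) + ((P m).2 : ℂ) * Complex.I‖ ≤ r + 1 :=
      le_of_mul_le_mul_right (by linarith) hzp0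
    have habs2 : ‖((P m).1 : ℂ) + ((P m).2 : ℂ) * Complex.I‖^2
        = (((P m).1:ℝ))^2 + (((P m).2:ℝ))^2 := by
      rw [show (((P m).1 : ℂ) + ((P m).2 : ℂ) * Complex.I)
          = ((((P m).1 : ℝ)) : ℂ) + ((((P m).2:ℝ)) : ℂ) * Complex.I by push_cast; ring]
      rw [Complex.sq_norm, Complex.normSq_add_mul_I]
    have hsq : (((P m).1:ℝ))^2 + (((P m).2:ℝ))^2 ≤ (r+1)^2 := by
      rw [← habs2]
      have := pow_le_pow_left₀ (norm_nonneg _) hw 2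
      exact this
    have hrb : (r+1)^2 ≤ (n:ℝ)^2 + 2*(n:ℝ) + 3 := by nlinarith
    have hfin : (((P m).1:ℝ))^2 + (((P m).2:ℝ))^2 ≤ (n:ℝ)^2 + 2*(n:ℝ) + 3 := by linarith
    exact_mod_cast hfin
  -- conclude via the integer core lemma
  have hd0 : D k ≠ 0 := by
    rw [hD]
    simp only [ne_eq, sub_eq_zero]
    exact_mod_cast hk
  have hd4 : 4 ≤ (D k)^2 := by
    have h1 : D k ≠ 1 := hcon.1
    have h2 : D k ≠ -1 := hcon.2
    have : 2 ≤ D k ∨ D k ≤ -2 := by omega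
    rcases this with h | h <;> nlinarith
  have hE0 : E 0 = D k := by rw [hE]; norm_num
  have hP1fst : (P 1).1 = -(n:ℤ) * D k + E 1 := by
    show (gilbertP (n:ℤ) E 1).1 = _
    simp only [gilbertP, hE0]
    ring
  have hP1snd : (P 1).2 = D k := by
    show (gilbertP (n:ℤ) E 1).2 = _
    simp only [gilbertP, hE0]
    ring
  have hP2snd : (P 2).2 = (P 1).1 - (n:ℤ) * (P 1).2 := rfl
  have hP3snd : (P 3).2 = (P 2).1 - (n:ℤ) * (P 2).2 := rfl
  have he1 : (E 1)^2 ≤ ((n:ℤ)^2)^2 := by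
    have h := hDb (k - 1)
    have : E 1 = D (k - 1) := by rw [hE]; norm_num
    rw [this]
    calc (D (k-1))^2 = |D (k-1)|^2 := (sq_abs _).symm
      _ ≤ ((n:ℤ)^2)^2 := pow_le_pow_left₀ (abs_nonneg _) h 2
  have hB1 := hB 1
  have hB2 := hB 2
  have hB3 := hB 3
  rw [hP1snd] at hB1
  have hn' : (2:ℤ) ≤ (n:ℤ) := by exact_mod_cast hn
  exact gilbert_int_core (n:ℤ) (D k) (E 1) (P 1).1 (P 2).2 (P 2).1 (P 3).2 hn' hd4 he1
    hP1fst (by rw [hP2snd, hP1snd]) hP3snd hB1 hB2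
    (by nlinarith [hB3, sq_nonneg ((P 3).1)])
end

section
/- Let b = −n+i with n ≥ 2 and let D ⊆ {0,...,n²} be separated, i.e. |d − d′| > 1 for all distinct d, d′ ∈ D. Then every element z of C_D = { ∑_{k≥1} d_k b^{−k} : d_k ∈ D } has a unique radix expansion of the form 0.d_1 d_2 ⋯ with all digits d_k in D. -/
open Filter Topology


open Complex

lemma stmt5_core (n δ x1 x2 : ℤ) (hn : 2 ≤ n) (hδ : 2 ≤ δ)
    (he0 : |x1 + n*δ| ≤ n^2)
    (h1 : x1^2 + δ^2 ≤ n^2+2*n+3)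
    (h2 : x2^2 + (x1 - n*δ)^2 ≤ n^2+2*n+3)
    (h3 : (x2 - n*(x1 - n*δ))^2 ≤ n^2+2*n+3) : False := by
  rw [abs_le] at he0
  have hδsq : 4 ≤ δ^2 := by nlinarith
  have hx1 : x1 ≤ n := by nlinarith
  have hkey : n*δ - x1 ≤ n+1 := by nlinarith [sq_nonneg x2]
  have hδ2 : δ = 2 := by nlinarith
  subst hδ2
  have hx1ge : n - 1 ≤ x1 := by linarith
  have hn3 : 3 ≤ n := by nlinarith
  rcases (by omega : x1 = n - 1 ∨ x1 = n) with h | h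
  · -- x2^2 ≤ 2, y3 = x2 + n^2 + n
    have hx2 : -1 ≤ x2 := by nlinarith
    nlinarith
  · -- x2^2 ≤ 2n+3, y3 = x2 + n^2
    have hx2 : -n ≤ x2 := by nlinarith
    nlinarith


lemma bnorm (n : ℕ) : ‖(-(n:ℂ) + Complex.I)‖ = Real.sqrt ((n:ℝ)^2+1) := by
  rw [Complex.norm_def, Complex.normSq_apply]
  norm_num
  ring_nf

lemma s_facts (n : ℕ) (hn : 2 ≤ n) :
    1 < Real.sqrt ((n:ℝ)^2+1) ∧ Real.sqrt ((n:ℝ)^2+1) < n + 1 := by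
  have h0 : (0:ℝ) ≤ (n:ℝ)^2+1 := by positivity
  have hs2 : Real.sqrt ((n:ℝ)^2+1) ^ 2 = (n:ℝ)^2+1 := Real.sq_sqrt h0
  have hsnn : 0 ≤ Real.sqrt ((n:ℝ)^2+1) := Real.sqrt_nonneg _
  have hn2 : (2:ℝ) ≤ n := by exact_mod_cast hn
  constructor <;> nlinarith

-- summability
lemma summ (n : ℕ) (hn : 2 ≤ n) (c : ℕ → ℤ) (hc : ∀ k, |c k| ≤ (n:ℤ)^2) :
    Summable (fun k : ℕ => ((c k : ℂ)) * (-(n:ℂ) + Complex.I)⁻¹ ^ (k+1)) := by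
  set w := (-(n:ℂ) + Complex.I)⁻¹ with hw
  have hwn : ‖w‖ < 1 := by
    rw [hw, norm_inv, bnorm]
    have := (s_facts n hn).1
    rw [inv_lt_one_iff₀]
    right; exact this
  apply Summable.of_norm_bounded (g := fun k => ((n:ℝ)^2 * ‖w‖) * ‖w‖^k)
  · exact (summable_geometric_of_lt_one (norm_nonneg _) hwn).mul_left _
  · intro k
    rw [norm_mul, norm_pow]
    have h1 : ‖(c k : ℂ)‖ ≤ (n:ℝ)^2 := by
      rw [Complex.norm_intCast]
      have := hc k
      have : (|c k| : ℝ) ≤ ((n:ℤ)^2 : ℝ) := by exact_mod_cast this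
      push_cast at this ⊢
      exact this
    calc ‖(c k : ℂ)‖ * ‖w‖^(k+1) ≤ (n:ℝ)^2 * ‖w‖^(k+1) := by
          apply mul_le_mul_of_nonneg_right h1 (by positivity)
      _ = ((n:ℝ)^2 * ‖w‖) * ‖w‖^k := by ring

lemma tail_bound (n : ℕ) (hn : 2 ≤ n) (c : ℕ → ℤ) (hc : ∀ k, |c k| ≤ (n:ℤ)^2) :
    ‖∑' k : ℕ, ((c k : ℂ)) * (-(n:ℂ) + Complex.I)⁻¹ ^ (k+1)‖ ≤ Real.sqrt ((n:ℝ)^2+1) + 1 := by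
  set s := Real.sqrt ((n:ℝ)^2+1) with hs
  set w := (-(n:ℂ) + Complex.I)⁻¹ with hw
  obtain ⟨hs1, hsn1⟩ := s_facts n hn
  have hs0 : 0 < s := by linarith
  have hwnorm : ‖w‖ = s⁻¹ := by rw [hw, norm_inv, bnorm]
  have hwn : ‖w‖ < 1 := by rw [hwnorm]; rw [inv_lt_one_iff₀]; right; exact hs1
  have hwnn : 0 ≤ ‖w‖ := norm_nonneg _
  have hbound : ∀ k : ℕ, ‖(c k : ℂ) * w ^ (k+1)‖ ≤ (n:ℝ)^2 * ‖w‖^(k+1) := by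
    intro k
    rw [norm_mul, norm_pow, Complex.norm_intCast]
    apply mul_le_mul_of_nonneg_right _ (by positivity)
    have := hc k
    have h2 : (|c k| : ℝ) ≤ ((n:ℤ)^2 : ℝ) := by exact_mod_cast this
    push_cast at h2 ⊢
    exact h2
  have hsum2 : Summable (fun k : ℕ => (n:ℝ)^2 * ‖w‖^(k+1)) := by
    apply Summable.congr (((summable_geometric_of_lt_one hwnn hwn).mul_left ((n:ℝ)^2 * ‖w‖)))
    intro k; ring
  have hsumnorm : Summable (fun k : ℕ => ‖(c k : ℂ) * w ^ (k+1)‖) := by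
    apply Summable.of_nonneg_of_le (fun k => norm_nonneg _) hbound hsum2
  calc ‖∑' k : ℕ, (c k : ℂ) * w ^ (k+1)‖ ≤ ∑' k : ℕ, ‖(c k : ℂ) * w ^ (k+1)‖ :=
        norm_tsum_le_tsum_norm hsumnorm
    _ ≤ ∑' k : ℕ, (n:ℝ)^2 * ‖w‖^(k+1) := Summable.tsum_le_tsum hbound hsumnorm hsum2
    _ = ((n:ℝ)^2 * ‖w‖) * (1 - ‖w‖)⁻¹ := by
        rw [show (fun k : ℕ => (n:ℝ)^2 * ‖w‖^(k+1)) = fun k : ℕ => ((n:ℝ)^2 * ‖w‖) * ‖w‖^k by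
          funext k; ring, tsum_mul_left, tsum_geometric_of_lt_one hwnn hwn]
    _ ≤ s + 1 := by
        rw [hwnorm]
        have hsq : s^2 = (n:ℝ)^2+1 := Real.sq_sqrt (by positivity)
        have h1s : (1 - s⁻¹) = (s-1)/s := by field_simp
        rw [h1s]
        rw [inv_div]
        have : (n:ℝ)^2 * s⁻¹ * (s/(s-1)) = (n:ℝ)^2/(s-1) := by
          field_simp
        rw [this]
        rw [div_le_iff₀ (by linarith)]
        nlinarith

lemma descent (n : ℕ) (hn : 2 ≤ n) (δ : ℤ) (hδ : 2 ≤ δ) (c : ℕ → ℤ)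
    (hc : ∀ k, |c k| ≤ (n:ℤ)^2)
    (h : (δ:ℂ) = ∑' k : ℕ, ((c k : ℂ)) * (-(n:ℂ) + Complex.I)⁻¹ ^ (k+1)) : False := by
  set s := Real.sqrt ((n:ℝ)^2+1) with hs
  set b := -(n:ℂ) + Complex.I with hbdef
  set w := b⁻¹ with hw
  obtain ⟨hs1, hsn1⟩ := s_facts n hn
  have hbnorm' : ‖b‖ = s := bnorm n
  have hb0 : b ≠ 0 := by
    intro h0
    rw [h0, norm_zero] at hbnorm'
    linarith
  have hbw : b * w = 1 := mul_inv_cancel₀ hb0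
  -- tails
  set T : ℕ → ℂ := fun j => ∑' k : ℕ, ((c (k+j) : ℂ)) * w ^ (k+1) with hT
  have hTsum : ∀ j, Summable (fun k : ℕ => ((c (k+j) : ℂ)) * w ^ (k+1)) :=
    fun j => summ n hn (fun k => c (k+j)) (fun k => hc _)
  have hrec : ∀ j, T (j+1) = b * T j - (c j : ℂ) := by
    intro j
    have hbmul : b * T j = ∑' k : ℕ, ((c (k+j) : ℂ)) * w ^ k := by
      rw [hT, ← tsum_mul_left]
      apply tsum_congr
      intro k
      have : b * w ^ (k+1) = w ^ k := by
        rw [pow_succ']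
        rw [← mul_assoc, hbw, one_mul]
      calc b * ((c (k+j) : ℂ) * w ^ (k+1)) = (c (k+j) : ℂ) * (b * w ^ (k+1)) := by ring
        _ = (c (k+j) : ℂ) * w ^ k := by rw [this]
    have hgsum : Summable (fun k : ℕ => ((c (k+j) : ℂ)) * w ^ k) := by
      apply Summable.congr ((hTsum j).mul_left b)
      intro k
      have : b * w ^ (k+1) = w ^ k := by
        rw [pow_succ', ← mul_assoc, hbw, one_mul]
      calc b * ((c (k+j) : ℂ) * w ^ (k+1)) = (c (k+j) : ℂ) * (b * w ^ (k+1)) := by ring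
        _ = (c (k+j) : ℂ) * w ^ k := by rw [this]
    have hsplit := Summable.sum_add_tsum_nat_add 1 hgsum
    rw [Finset.sum_range_one] at hsplit
    simp only [pow_zero, mul_one, Nat.zero_add] at hsplit
    have htail : (∑' i : ℕ, ((c (i+1+j) : ℂ)) * w ^ (i+1)) = T (j+1) := by
      rw [hT]
      apply tsum_congr
      intro k
      rw [show k+1+j = k+(j+1) by omega]
    rw [htail] at hsplit
    rw [hbmul, ← hsplit]
    ring
  -- integer pair sequence
  set X : ℕ → ℤ × ℤ := fun j => Nat.rec ((δ, 0) : ℤ × ℤ)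
    (fun j p => (-(n:ℤ) * p.1 - p.2 - c j, p.1 - (n:ℤ) * p.2)) j with hXdef
  have hX : ∀ j, T j = ((X j).1 : ℂ) + ((X j).2 : ℂ) * Complex.I := by
    intro j
    induction j with
    | zero =>
      have : T 0 = (δ : ℂ) := by
        rw [h]
        show (∑' k : ℕ, ((c (k+0) : ℂ)) * w ^ (k+1)) = _
        apply tsum_congr; intro k; norm_num
      rw [this]
      simp [hXdef]
    | succ j ih =>
      rw [hrec j, ih]
      show _ = ((-(n:ℤ) * (X j).1 - (X j).2 - c j : ℤ) : ℂ) + (((X j).1 - (n:ℤ) * (X j).2 : ℤ) : ℂ) * Complex.I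
      rw [hbdef]
      push_cast
      linear_combination ((X j).2 : ℂ) * Complex.I_sq
  have hZ : ∀ j, (X j).1^2 + (X j).2^2 ≤ (n:ℤ)^2 + 2*n + 3 := by
    intro j
    have hb1 : ‖T j‖ ≤ s + 1 := tail_bound n hn (fun k => c (k+j)) (fun k => hc _)
    rw [hX j] at hb1
    have habs : ‖(((X j).1 : ℤ) : ℂ) + (((X j).2 : ℤ) : ℂ) * Complex.I‖
        = Real.sqrt ((((X j).1 : ℝ))^2 + (((X j).2 : ℝ))^2) := by
      rw [show (((X j).1 : ℤ) : ℂ) = ((((X j).1 : ℤ) : ℝ) : ℂ) by push_cast; ring]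
      rw [show (((X j).2 : ℤ) : ℂ) = ((((X j).2 : ℤ) : ℝ) : ℂ) by push_cast; ring]
      rw [Complex.norm_add_mul_I]
    rw [habs] at hb1
    have hnn : (0:ℝ) ≤ (((X j).1 : ℝ))^2 + (((X j).2 : ℝ))^2 := by positivity
    have hsq : (((X j).1 : ℝ))^2 + (((X j).2 : ℝ))^2 ≤ (s+1)^2 := by
      have := Real.sq_sqrt hnn
      nlinarith [Real.sqrt_nonneg ((((X j).1 : ℝ))^2 + (((X j).2 : ℝ))^2)]
    have hs2 : s^2 = (n:ℝ)^2+1 := Real.sq_sqrt (by positivity)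
    have hreal : (((X j).1 : ℝ))^2 + (((X j).2 : ℝ))^2 < (n:ℝ)^2 + 2*n + 4 := by nlinarith
    have hint : ((X j).1^2 + (X j).2^2 : ℤ) < (n:ℤ)^2 + 2*n + 4 := by exact_mod_cast hreal
    linarith
  -- explicit components
  have e1 : X 1 = (-(n:ℤ)*δ - 0 - c 0, δ - (n:ℤ)*0) := rfl
  set x1 : ℤ := -(n:ℤ)*δ - c 0 with hx1
  have e1' : X 1 = (x1, δ) := by rw [e1, hx1]; norm_num
  have e2 : X 2 = (-(n:ℤ) * x1 - δ - c 1, x1 - (n:ℤ)*δ) := by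
    show (-(n:ℤ) * (X 1).1 - (X 1).2 - c 1, (X 1).1 - (n:ℤ) * (X 1).2) = _
    rw [e1']
  set x2 : ℤ := -(n:ℤ) * x1 - δ - c 1 with hx2
  have e3 : (X 3).2 = x2 - (n:ℤ) * (x1 - (n:ℤ)*δ) := by
    show (X 2).1 - (n:ℤ) * (X 2).2 = _
    rw [e2]
  apply stmt5_core n δ x1 x2 (by exact_mod_cast hn) hδ
  · rw [hx1]
    have := hc 0
    rw [show x1 + (n:ℤ)*δ = -(c 0) by rw [hx1]; ring, abs_neg]
    exact hc 0
  · have := hZ 1; rw [e1'] at this; exact this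
  · have := hZ 2; rw [e2] at this; exact this
  · have := hZ 3
    rw [e3] at this
    nlinarith [sq_nonneg (X 3).1]


/-- Uniqueness of `D`-digit expansions: if `b = -n + i` with `n ≥ 2` and
`D ⊆ {0,…,n²}` is separated (distinct digits differ by more than 1), then
two expansions `∑ d_k b^{-k}` with all digits in `D` representing the same
complex number have the same digits. -/
theorem stmt5 (n : ℕ) (hn : 2 ≤ n) (D : Set ℕ) (hD : ∀ d ∈ D, d ≤ n ^ 2)
    (hsep : ∀ d ∈ D, ∀ d' ∈ D, d ≠ d' → 1 < |(d : ℤ) - (d' : ℤ)|)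
    (d d' : ℕ → ℕ) (hd : ∀ k, d k ∈ D) (hd' : ∀ k, d' k ∈ D)
    (heq : ∑' k : ℕ, (d k : ℂ) * (-(n : ℂ) + Complex.I) ^ (-(k + 1 : ℤ)) =
      ∑' k : ℕ, (d' k : ℂ) * (-(n : ℂ) + Complex.I) ^ (-(k + 1 : ℤ))) :
    d = d' := by
  classical
  by_contra hne
  have hex : ∃ k, d k ≠ d' k := Function.ne_iff.mp hne
  set b : ℂ := -(n:ℂ) + Complex.I with hbdef
  set w : ℂ := b⁻¹ with hwdef
  obtain ⟨hs1, hsn1⟩ := s_facts n hn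
  have hbnorm' : ‖b‖ = Real.sqrt ((n:ℝ)^2+1) := bnorm n
  have hb0 : b ≠ 0 := by
    intro h0; rw [h0, norm_zero] at hbnorm'; linarith
  have hw0 : w ≠ 0 := inv_ne_zero hb0
  have hbw : b * w = 1 := mul_inv_cancel₀ hb0
  have hzpow : ∀ k : ℕ, b ^ (-(k + 1 : ℤ)) = w ^ (k+1) := by
    intro k
    rw [show (-(k + 1 : ℤ)) = -((k+1 : ℕ) : ℤ) by push_cast; ring, zpow_neg, zpow_natCast,
      hwdef, inv_pow]
  simp only [hzpow] at heq
  -- digit difference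
  set c : ℕ → ℤ := fun k => (d k : ℤ) - d' k with hcdef
  have hcb : ∀ k, |c k| ≤ (n:ℤ)^2 := by
    intro k
    have h1 : d k ≤ n^2 := hD _ (hd k)
    have h2 : d' k ≤ n^2 := hD _ (hd' k)
    show |((d k : ℕ):ℤ) - ((d' k : ℕ):ℤ)| ≤ (n:ℤ)^2
    rw [show ((n:ℤ)^2) = ((n^2:ℕ):ℤ) by push_cast; ring, abs_le]
    omega
  have hsumd : Summable (fun k : ℕ => (d k : ℂ) * w ^ (k+1)) := by
    apply Summable.congr (summ n hn (fun k => (d k : ℤ)) (fun k => by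
      show |((d k : ℕ):ℤ)| ≤ (n:ℤ)^2
      have := hD _ (hd k)
      rw [show ((n:ℤ)^2) = ((n^2:ℕ):ℤ) by push_cast; ring, abs_le]
      omega))
    intro k; push_cast; ring
  have hsumd' : Summable (fun k : ℕ => (d' k : ℂ) * w ^ (k+1)) := by
    apply Summable.congr (summ n hn (fun k => (d' k : ℤ)) (fun k => by
      show |((d' k : ℕ):ℤ)| ≤ (n:ℤ)^2
      have := hD _ (hd' k)
      rw [show ((n:ℤ)^2) = ((n^2:ℕ):ℤ) by push_cast; ring, abs_le]
      omega))
    intro k; push_cast; ring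
  set F : ℕ → ℂ := fun k => ((c k : ℤ) : ℂ) * w ^ (k+1) with hFdef
  have hFeq : ∀ k, F k = (d k : ℂ) * w ^ (k+1) - (d' k : ℂ) * w ^ (k+1) := by
    intro k; rw [hFdef, hcdef]; push_cast; ring
  have hFsum : Summable F := by
    apply Summable.congr (hsumd.sub hsumd')
    intro k; rw [hFeq]
  have hFzero : ∑' k, F k = 0 := by
    calc ∑' k, F k = ∑' k, ((d k : ℂ) * w ^ (k+1) - (d' k : ℂ) * w ^ (k+1)) :=
          tsum_congr hFeq
      _ = (∑' k : ℕ, (d k : ℂ) * w ^ (k+1)) - ∑' k : ℕ, (d' k : ℂ) * w ^ (k+1) :=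
          Summable.tsum_sub hsumd hsumd'
      _ = 0 := by rw [heq]; ring
  set m := Nat.find hex with hmdef
  have hm : d m ≠ d' m := Nat.find_spec hex
  have hlt : ∀ k < m, d k = d' k := fun k hk => not_not.mp (Nat.find_min hex hk)
  have hsplit := Summable.sum_add_tsum_nat_add m hFsum
  rw [hFzero] at hsplit
  have hfin : ∑ i ∈ Finset.range m, F i = 0 := by
    apply Finset.sum_eq_zero
    intro i hi
    have : c i = 0 := by
      rw [hcdef]; simp only []; rw [hlt i (Finset.mem_range.mp hi)]; ring
    rw [hFdef]; simp only []; rw [this]; push_cast; ring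
  rw [hfin, zero_add] at hsplit
  -- hsplit : ∑' i, F (i + m) = 0
  have hshift : ∀ i : ℕ, F (i + m) = w ^ m * (((c (i+m) : ℤ):ℂ) * w ^ (i+1)) := by
    intro i
    rw [hFdef]
    simp only []
    rw [show i + m + 1 = (i+1) + m by omega, pow_add]
    ring
  have hGsum : Summable (fun i : ℕ => ((c (i+m) : ℤ):ℂ) * w ^ (i+1)) :=
    summ n hn (fun i => c (i+m)) (fun i => hcb _)
  have hG : ∑' i : ℕ, ((c (i+m) : ℤ):ℂ) * w ^ (i+1) = 0 := by
    have : ∑' i : ℕ, F (i + m) = w ^ m * ∑' i : ℕ, ((c (i+m) : ℤ):ℂ) * w ^ (i+1) := by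
      rw [← tsum_mul_left]
      exact tsum_congr hshift
    rw [this] at hsplit
    rcases mul_eq_zero.mp hsplit with h | h
    · exact absurd h (pow_ne_zero _ hw0)
    · exact h
  -- split off first term
  have hsplit1 := Summable.sum_add_tsum_nat_add 1 hGsum
  rw [hG, Finset.sum_range_one] at hsplit1
  simp only [Nat.zero_add, pow_one] at hsplit1
  -- hsplit1 : c m * w + ∑' i, c (i+1+m) * w^(i+2) = 0
  have key0 : ((c m : ℤ) : ℂ) + ∑' i : ℕ, ((c (i+1+m) : ℤ):ℂ) * w ^ (i+1) = 0 := by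
    have hb1 : b * (((c m : ℤ):ℂ) * w) = ((c m : ℤ):ℂ) := by
      rw [show b * (((c m : ℤ):ℂ) * w) = ((c m : ℤ):ℂ) * (b * w) by ring, hbw, mul_one]
    have hb2 : b * ∑' i : ℕ, ((c (i+1+m) : ℤ):ℂ) * w ^ (i+1+1) =
        ∑' i : ℕ, ((c (i+1+m) : ℤ):ℂ) * w ^ (i+1) := by
      rw [← tsum_mul_left]
      apply tsum_congr
      intro i
      have : b * w ^ (i+1+1) = w ^ (i+1) := by
        rw [pow_succ', ← mul_assoc, hbw, one_mul]
      calc b * (((c (i+1+m) : ℤ):ℂ) * w ^ (i+1+1))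
          = ((c (i+1+m) : ℤ):ℂ) * (b * w ^ (i+1+1)) := by ring
        _ = ((c (i+1+m) : ℤ):ℂ) * w ^ (i+1) := by rw [this]
    calc ((c m : ℤ):ℂ) + ∑' i : ℕ, ((c (i+1+m) : ℤ):ℂ) * w ^ (i+1)
        = b * (((c m : ℤ):ℂ) * w + ∑' i : ℕ, ((c (i+1+m) : ℤ):ℂ) * w ^ (i+1+1)) := by
          rw [mul_add, hb1, hb2]
      _ = b * 0 := by rw [hsplit1]
      _ = 0 := by ring
  -- |c m| ≥ 2
  have habs : 2 ≤ |c m| := by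
    have := hsep _ (hd m) _ (hd' m) hm
    show (2:ℤ) ≤ |((d m : ℕ):ℤ) - ((d' m : ℕ):ℤ)|
    omega
  rcases le_or_gt 0 (c m) with hpos | hneg
  · -- c m ≥ 2
    have h2 : 2 ≤ c m := by rw [abs_of_nonneg hpos] at habs; exact habs
    apply descent n hn (c m) h2 (fun i => -(c (i+1+m)))
      (fun i => by rw [abs_neg]; exact hcb _)
    have : ∑' i : ℕ, ((-(c (i+1+m)) : ℤ):ℂ) * w ^ (i+1)
        = -∑' i : ℕ, ((c (i+1+m) : ℤ):ℂ) * w ^ (i+1) := by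
      rw [← tsum_neg]
      apply tsum_congr
      intro i; push_cast; ring
    rw [this]
    linear_combination key0
  · -- c m ≤ -2
    have h2 : 2 ≤ -(c m) := by rw [abs_of_neg hneg] at habs; exact habs
    apply descent n hn (-(c m)) h2 (fun i => c (i+1+m)) (fun i => hcb _)
    push_cast
    linear_combination -key0
end

section
/- Let b = −n+i with n ≥ 2 and let D ⊆ {0,...,n²} be separated. Then the collection of sets of the form 0.d_1 d_2 ⋯ d_m + b^{−m} C_D, where m ≥ 1 and d_1,...,d_m ∈ D, forms a basis for the subspace topology on C_D inherited from ℂ. -/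
open Filter Topology

/-- The base-`(-n+i)` restricted digit Cantor set with digit set `D`. -/
noncomputable def CDset (n : ℕ) (D : Set ℕ) : Set ℂ :=
  {z | ∃ a : ℕ → ℕ, (∀ k, a k ∈ D) ∧
    z = ∑' k : ℕ, (a k : ℂ) * (-(n : ℂ) + Complex.I) ^ (-(k + 1 : ℤ))}

/-- The cylinder `0.d₁⋯d_m + b^{-m}C_D` inside `C_D`, viewed as a subset of
the subspace `↥(CDset n D)`: those points whose `D`-digit expansion starts
with the word `w`. -/
noncomputable def cylinder (n : ℕ) (D : Set ℕ) (m : ℕ) (w : Fin m → ℕ) :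
    Set ↥(CDset n D) :=
  {z | ∃ a : ℕ → ℕ, (∀ k, a k ∈ D) ∧ (∀ i : Fin m, a i = w i) ∧
    (z : ℂ) = ∑' k : ℕ, (a k : ℂ) * (-(n : ℂ) + Complex.I) ^ (-(k + 1 : ℤ))}

namespace Stmt8Aux

noncomputable def Complex.abs : AbsoluteValue ℂ ℝ :=
  IsAbsoluteValue.toAbsoluteValue (norm : ℂ → ℝ)

theorem Complex.norm_eq_abs (z : ℂ) : ‖z‖ = Complex.abs z := rfl

theorem Complex.sq_abs (z : ℂ) : Complex.abs z ^ 2 = Complex.normSq z := Complex.sq_norm z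

theorem Complex.abs_intCast (k : ℤ) : Complex.abs (k : ℂ) = |(k : ℝ)| := by
  show ‖(k : ℂ)‖ = _; simp

theorem Complex.abs_natCast (k : ℕ) : Complex.abs (k : ℂ) = (k : ℝ) := by
  show ‖(k : ℂ)‖ = _; simp

theorem Complex.abs_ofReal (r : ℝ) : Complex.abs (r : ℂ) = |r| := by
  show ‖(r : ℂ)‖ = _; simp

theorem Complex.abs_im_le_abs (z : ℂ) : |z.im| ≤ Complex.abs z := Complex.abs_im_le_norm z

noncomputable def bb (n : ℕ) : ℂ := -(n : ℂ) + Complex.I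

lemma bb_im (n : ℕ) : (bb n).im = 1 := by simp [bb]
lemma bb_re (n : ℕ) : (bb n).re = -(n:ℝ) := by simp [bb]

lemma bb_ne (n : ℕ) : bb n ≠ 0 := by
  intro h
  have := congrArg Complex.im h
  simp [bb] at this

lemma normSq_bb (n : ℕ) : Complex.normSq (bb n) = n^2 + 1 := by
  simp [Complex.normSq_apply, bb_re, bb_im]; ring

lemma sq_abs_bb (n : ℕ) : (Complex.abs (bb n))^2 = n^2 + 1 := by
  rw [Complex.sq_abs, normSq_bb]

lemma abs_bb_pos (n : ℕ) : 0 < Complex.abs (bb n) :=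
  Complex.abs.pos (bb_ne n)

lemma two_lt_abs_bb (n : ℕ) (hn : 2 ≤ n) : 2 < Complex.abs (bb n) := by
  have hc : (2:ℝ) ≤ (n:ℝ) := by exact_mod_cast hn
  have h : (2:ℝ)^2 < Complex.abs (bb n) ^ 2 := by
    rw [sq_abs_bb]; nlinarith
  exact lt_of_pow_lt_pow_left₀ 2 (Complex.abs.nonneg _) h

lemma abs_bb_lt (n : ℕ) (hn : 2 ≤ n) : 2 * Complex.abs (bb n) < (n:ℝ)^2 + 2 := by
  have hc : (2:ℝ) ≤ (n:ℝ) := by exact_mod_cast hn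
  have h : (2 * Complex.abs (bb n))^2 < ((n:ℝ)^2 + 2)^2 := by
    have h1 := sq_abs_bb n
    have h2 : (4:ℝ) ≤ (n:ℝ)^2 := by nlinarith
    have h4 : (16:ℝ) ≤ ((n:ℝ)^2)^2 := by nlinarith
    nlinarith
  exact lt_of_pow_lt_pow_left₀ 2 (by positivity) h

noncomputable def rr (n : ℕ) : ℝ := (Complex.abs (bb n))⁻¹

lemma rr_pos (n : ℕ) : 0 < rr n := inv_pos.mpr (abs_bb_pos n)

lemma rr_lt_half (n : ℕ) (hn : 2 ≤ n) : rr n < 1/2 := by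
  rw [rr, inv_lt_comm₀ (abs_bb_pos n) (by norm_num)]
  simpa using two_lt_abs_bb n hn

lemma rr_lt_one (n : ℕ) (hn : 2 ≤ n) : rr n < 1 := by
  have := rr_lt_half n hn; linarith

lemma abs_w_pow (n : ℕ) (k : ℕ) : Complex.abs ((bb n)⁻¹ ^ k) = rr n ^ k := by
  simp [rr, map_pow, map_inv₀]

/-- rewrite the zpow in the defining sums -/
lemma hpow (n : ℕ) (k : ℕ) :
    (-(n : ℂ) + Complex.I) ^ (-(k + 1 : ℤ)) = (bb n)⁻¹ ^ (k+1) := by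
  have h : ((k:ℤ)+1) = ((k+1 : ℕ) : ℤ) := by push_cast; ring
  rw [show (-(n : ℂ) + Complex.I) = bb n from rfl, h, zpow_neg, zpow_natCast, inv_pow]


section Analytic

lemma summable_geo_aux (n : ℕ) (hn : 2 ≤ n) (B : ℝ) :
    Summable (fun k : ℕ => B * rr n ^ (k+1)) := by
  have h : Summable (fun k : ℕ => rr n ^ k) :=
    summable_geometric_of_lt_one (le_of_lt (rr_pos n)) (rr_lt_one n hn)
  have h2 := h.mul_left (B * rr n)
  refine h2.congr fun k => ?_
  ring

lemma summable_aux (n : ℕ) (hn : 2 ≤ n) (g : ℕ → ℂ) (B : ℝ)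
    (hg : ∀ k, Complex.abs (g k) ≤ B) :
    Summable (fun k => g k * (bb n)⁻¹ ^ (k+1)) := by
  apply Summable.of_norm_bounded (summable_geo_aux n hn B)
  intro k
  rw [Complex.norm_eq_abs, map_mul, abs_w_pow]
  exact mul_le_mul_of_nonneg_right (hg k) (pow_nonneg (rr_pos n).le _)

lemma tsum_rr (n : ℕ) (hn : 2 ≤ n) : ∑' k : ℕ, rr n ^ (k+1) = rr n * (1 - rr n)⁻¹ := by
  have h : (fun k : ℕ => rr n ^ (k+1)) = (fun k : ℕ => rr n * rr n ^ k) := by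
    funext k; ring
  rw [h, tsum_mul_left, tsum_geometric_of_lt_one (le_of_lt (rr_pos n)) (rr_lt_one n hn)]

lemma norm_tsum_le (n : ℕ) (hn : 2 ≤ n) (g : ℕ → ℂ) (B : ℝ)
    (hg : ∀ k, Complex.abs (g k) ≤ B) :
    Complex.abs (∑' k : ℕ, g k * (bb n)⁻¹ ^ (k+1)) ≤ B * (rr n * (1 - rr n)⁻¹) := by
  have hB : 0 ≤ B := le_trans (Complex.abs.nonneg _) (hg 0)
  have hsn : Summable fun k : ℕ => ‖g k * (bb n)⁻¹ ^ (k+1)‖ := by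
    apply Summable.of_nonneg_of_le (fun k => norm_nonneg _)
      (fun k => ?_) (summable_geo_aux n hn B)
    rw [Complex.norm_eq_abs, map_mul, abs_w_pow]
    exact mul_le_mul_of_nonneg_right (hg k) (pow_nonneg (rr_pos n).le _)
  calc Complex.abs (∑' k : ℕ, g k * (bb n)⁻¹ ^ (k+1))
      ≤ ∑' k : ℕ, ‖g k * (bb n)⁻¹ ^ (k+1)‖ := by
        rw [← Complex.norm_eq_abs]; exact norm_tsum_le_tsum_norm hsn
    _ ≤ ∑' k : ℕ, B * rr n ^ (k+1) := by
        apply Summable.tsum_le_tsum _ hsn (summable_geo_aux n hn B)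
        intro k
        rw [Complex.norm_eq_abs, map_mul, abs_w_pow]
        exact mul_le_mul_of_nonneg_right (hg k) (pow_nonneg (rr_pos n).le _)
    _ = B * (rr n * (1 - rr n)⁻¹) := by rw [tsum_mul_left, tsum_rr n hn]

lemma w_im (n : ℕ) : ((bb n)⁻¹).im = -(1 / ((n:ℝ)^2+1)) := by
  rw [Complex.inv_im, bb_im, normSq_bb]
  ring

lemma im_bound (n : ℕ) (hn : 2 ≤ n) (g : ℕ → ℤ) (hg : ∀ k, |g k| ≤ (n:ℤ)^2) :
    |(∑' k : ℕ, (g k : ℂ) * (bb n)⁻¹ ^ (k+1)).im| < 3 := by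
  have hB : ∀ k, Complex.abs ((g k : ℂ)) ≤ (n:ℝ)^2 := by
    intro k
    rw [Complex.abs_intCast]
    have := hg k
    have : |(g k : ℝ)| ≤ ((n:ℤ)^2 : ℝ) := by exact_mod_cast abs_le.mpr (abs_le.mp this)
    simpa using this
  have hsum := summable_aux n hn (fun k => (g k : ℂ)) ((n:ℝ)^2) hB
  rw [Complex.im_tsum hsum]
  have hsumim : Summable fun k : ℕ => ((g k : ℂ) * (bb n)⁻¹ ^ (k+1)).im := by
    apply Summable.of_norm_bounded (summable_geo_aux n hn ((n:ℝ)^2))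
    intro k
    rw [Real.norm_eq_abs]
    refine le_trans (Complex.abs_im_le_abs _) ?_
    rw [map_mul, abs_w_pow]
    exact mul_le_mul_of_nonneg_right (hB k) (pow_nonneg (rr_pos n).le _)
  rw [hsumim.tsum_eq_zero_add]
  have h0 : |((g 0 : ℂ) * (bb n)⁻¹ ^ (0+1)).im| < 1 := by
    have : ((g 0 : ℂ) * (bb n)⁻¹ ^ (0+1)).im = (g 0 : ℝ) * ((bb n)⁻¹).im := by
      simp [Complex.mul_im]
    rw [this, w_im, abs_mul]
    have h1 : |(g 0 : ℝ)| ≤ (n:ℝ)^2 := by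
      have := hB 0; rwa [Complex.abs_intCast] at this
    have h2 : |(-(1 / ((n:ℝ)^2+1)))| = 1/((n:ℝ)^2+1) := by
      rw [abs_neg, abs_of_pos]; positivity
    rw [h2]
    have hpos : (0:ℝ) < (n:ℝ)^2 + 1 := by positivity
    rw [div_eq_inv_mul, ← mul_assoc, mul_comm, ← mul_assoc, one_mul, ← div_eq_mul_inv,
      div_lt_one hpos]
    calc |(g 0:ℝ)| ≤ (n:ℝ)^2 := h1
      _ < (n:ℝ)^2 + 1 := by linarith
  have htail : |∑' k : ℕ, ((g (k+1) : ℂ) * (bb n)⁻¹ ^ (k+1+1)).im| < 2 := by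
    have hs2 : Summable fun k : ℕ => ((g (k+1) : ℂ) * (bb n)⁻¹ ^ (k+1+1)).im :=
      (hsumim.comp_injective (add_left_injective 1))
    have hbnd : ∀ k : ℕ, ‖((g (k+1) : ℂ) * (bb n)⁻¹ ^ (k+1+1)).im‖ ≤
        ((n:ℝ)^2 * rr n) * rr n ^ (k+1) := by
      intro k
      rw [Real.norm_eq_abs]
      refine le_trans (Complex.abs_im_le_abs _) ?_
      rw [map_mul, abs_w_pow]
      calc Complex.abs ((g (k+1):ℂ)) * rr n ^ (k+1+1)
          ≤ (n:ℝ)^2 * rr n ^ (k+1+1) :=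
            mul_le_mul_of_nonneg_right (hB _) (pow_nonneg (rr_pos n).le _)
        _ = ((n:ℝ)^2 * rr n) * rr n ^ (k+1) := by ring
    have hsumb : Summable (fun k : ℕ => ((n:ℝ)^2 * rr n) * rr n ^ (k+1)) :=
      summable_geo_aux n hn _
    have h1 : |∑' k : ℕ, ((g (k+1) : ℂ) * (bb n)⁻¹ ^ (k+1+1)).im| ≤
        ∑' k : ℕ, ((n:ℝ)^2 * rr n) * rr n ^ (k+1) := by
      rw [← Real.norm_eq_abs]
      refine le_trans (norm_tsum_le_tsum_norm ?_)
        (Summable.tsum_le_tsum (fun k => by simpa using hbnd k) ?_ hsumb)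
      · exact Summable.of_nonneg_of_le (fun _ => norm_nonneg _) hbnd hsumb
      · exact (Summable.of_nonneg_of_le (fun _ => norm_nonneg _) hbnd hsumb).congr
          (fun k => by simp [Real.norm_eq_abs])
    have hval : ∑' k : ℕ, ((n:ℝ)^2 * rr n) * rr n ^ (k+1)
        = ((n:ℝ)^2 * rr n) * (rr n * (1 - rr n)⁻¹) := by
      rw [tsum_mul_left, tsum_rr n hn]
    have harith : ((n:ℝ)^2 * rr n) * (rr n * (1 - rr n)⁻¹) < 2 := by
      set s := Complex.abs (bb n) with hsdef
      have hs2 : s^2 = (n:ℝ)^2 + 1 := sq_abs_bb n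
      have hsgt : 2 < s := two_lt_abs_bb n hn
      have h2s : 2*s < (n:ℝ)^2 + 2 := by have := abs_bb_lt n hn; linarith
      have hs0 : s ≠ 0 := by linarith
      have hs1 : (1:ℝ) - s⁻¹ ≠ 0 := by
        have : s⁻¹ < 1/2 := rr_lt_half n hn
        have : s⁻¹ < 1 := by linarith
        linarith
      have heq : ((n:ℝ)^2 * rr n) * (rr n * (1 - rr n)⁻¹) = (n:ℝ)^2 / (s^2 - s) := by
        rw [rr, ← hsdef]
        field_simp
      rw [heq, div_lt_iff₀ (by nlinarith : (0:ℝ) < s^2 - s)]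
      nlinarith
    calc |∑' k : ℕ, ((g (k+1) : ℂ) * (bb n)⁻¹ ^ (k+1+1)).im|
        ≤ ((n:ℝ)^2 * rr n) * (rr n * (1 - rr n)⁻¹) := h1.trans_eq hval
      _ < 2 := harith
  calc |((g 0 : ℂ) * (bb n)⁻¹ ^ (0+1)).im + ∑' k : ℕ, ((g (k+1) : ℂ) * (bb n)⁻¹ ^ (k+1+1)).im|
      ≤ |((g 0 : ℂ) * (bb n)⁻¹ ^ (0+1)).im| + |∑' k : ℕ, ((g (k+1) : ℂ) * (bb n)⁻¹ ^ (k+1+1)).im| :=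
        abs_add_le _ _
    _ < 3 := by linarith

end Analytic

def PQ (n : ℕ) (f : ℕ → ℤ) : ℕ → ℤ × ℤ
  | 0 => (0, 0)
  | (m+1) => (-(n:ℤ) * (PQ n f m).1 - (PQ n f m).2 - f m,
      (PQ n f m).1 - (n:ℤ) * (PQ n f m).2)

lemma arith (n : ℕ) (hn : 2 ≤ n) (q : ℕ → ℤ) (hb : ∀ m, |q m| ≤ 2)
    (h1 : q 1 = 0) (h2 : |q 2| = 2)
    (hf : ∀ m, |q (m+2) + 2*(n:ℤ)*(q (m+1)) + ((n:ℤ)^2+1) * q m| ≤ (n:ℤ)^2) : False := by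
  have hb' : ∀ m, -2 ≤ q m ∧ q m ≤ 2 := fun m => abs_le.mp (hb m)
  have hf' : ∀ m, -((n:ℤ)^2) ≤ q (m+2) + 2*(n:ℤ)*q (m+1) + ((n:ℤ)^2+1) * q m ∧
      q (m+2) + 2*(n:ℤ)*q (m+1) + ((n:ℤ)^2+1) * q m ≤ (n:ℤ)^2 := fun m => abs_le.mp (hf m)
  have h2' : q 2 = 2 ∨ q 2 = -2 := by
    rcases (abs_eq (by norm_num : (0:ℤ) ≤ 2)).mp h2 with h | h
    exacts [Or.inl h, Or.inr h]
  rcases le_or_gt n 4 with h4 | h5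
  · interval_cases n
    · have ha := hf' 1; have h3 := hb' 3
      norm_num at ha
      omega
    · have ha := hf' 1; have h3 := hb' 3
      norm_num at ha
      omega
    · have ha := hf' 2; have hc := hf' 3
      have hb3 := hb' 3; have hb4 := hb' 4; have hb5 := hb' 5
      norm_num at ha hc
      omega
  · have hN : (5:ℤ) ≤ (n:ℤ) := by exact_mod_cast h5
    have ha := hf' 2
    have hb3 := hb' 3; have hb4 := hb' 4
    have hNN : (5:ℤ)*(n:ℤ) ≤ (n:ℤ)*(n:ℤ) :=
      mul_le_mul_of_nonneg_right hN (by linarith)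
    rcases h2' with h | h
    · rw [h] at ha
      have hq3 : 2*(n:ℤ)*(-2) ≤ 2*(n:ℤ)*q 3 :=
        mul_le_mul_of_nonneg_left hb3.1 (by linarith)
      nlinarith [ha.2, hb4.1]
    · rw [h] at ha
      have hq3 : 2*(n:ℤ)*q 3 ≤ 2*(n:ℤ)*2 :=
        mul_le_mul_of_nonneg_left hb3.2 (by linarith)
      nlinarith [ha.1, hb4.2]

theorem key_unique (n : ℕ) (hn : 2 ≤ n) (f : ℕ → ℤ)
    (hub : ∀ k, |f k| ≤ (n:ℤ)^2) (hsep : ∀ k, f k = 0 ∨ 2 ≤ |f k|)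
    (hz : ∑' k : ℕ, (f k : ℂ) * (bb n)⁻¹ ^ (k+1) = 0) :
    f 0 = 0 := by
  have hB : ∀ (m : ℕ) (k : ℕ), Complex.abs ((f (m+k) : ℂ)) ≤ (n:ℝ)^2 := by
    intro m k
    rw [Complex.abs_intCast]
    have h := hub (m+k)
    have : |(f (m+k) : ℝ)| ≤ ((n:ℤ)^2 : ℝ) := by exact_mod_cast h
    simpa using this
  set T : ℕ → ℂ := fun m => ∑' k : ℕ, (f (m+k) : ℂ) * (bb n)⁻¹ ^ (k+1) with hT
  have hsumT : ∀ m, Summable (fun k : ℕ => (f (m+k) : ℂ) * (bb n)⁻¹ ^ (k+1)) :=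
    fun m => summable_aux n hn _ ((n:ℝ)^2) (hB m)
  have hrec : ∀ m, bb n * T m = (f m : ℂ) + T (m+1) := by
    intro m
    have hsplit : T m = (f m : ℂ) * (bb n)⁻¹ + (bb n)⁻¹ * T (m+1) := by
      show (∑' k : ℕ, (f (m+k) : ℂ) * (bb n)⁻¹ ^ (k+1)) = (f m : ℂ) * (bb n)⁻¹
        + (bb n)⁻¹ * ∑' k : ℕ, (f ((m+1)+k) : ℂ) * (bb n)⁻¹ ^ (k+1)
      rw [(hsumT m).tsum_eq_zero_add]
      congr 1
      · simp
      · rw [← tsum_mul_left]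
        congr 1
        funext k
        have hidx : m + (k+1) = (m+1) + k := by omega
        rw [hidx, pow_succ]
        ring
    have hw : bb n * (bb n)⁻¹ = 1 := mul_inv_cancel₀ (bb_ne n)
    calc bb n * T m = bb n * ((f m : ℂ) * (bb n)⁻¹ + (bb n)⁻¹ * T (m+1)) := by rw [← hsplit]
      _ = (bb n * (bb n)⁻¹) * (f m : ℂ) + (bb n * (bb n)⁻¹) * T (m+1) := by ring
      _ = (f m : ℂ) + T (m+1) := by rw [hw]; ring
  have hPQ : ∀ m, T m = ((PQ n f m).1 : ℂ) + ((PQ n f m).2 : ℂ) * Complex.I := by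
    intro m
    induction m with
    | zero =>
        have h00 : T 0 = ∑' k : ℕ, (f k : ℂ) * (bb n)⁻¹ ^ (k+1) := by
          show (∑' k : ℕ, (f (0+k) : ℂ) * (bb n)⁻¹ ^ (k+1)) = _
          simp only [Nat.zero_add]
        rw [h00, hz]
        simp [PQ]
    | succ m ih =>
        have h1 : T (m+1) = bb n * T m - (f m : ℂ) := by
          rw [hrec m]; ring
        rw [h1, ih]
        show _ = ((-(n:ℤ) * (PQ n f m).1 - (PQ n f m).2 - f m : ℤ) : ℂ) +
          (((PQ n f m).1 - (n:ℤ) * (PQ n f m).2 : ℤ) : ℂ) * Complex.I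
        rw [show bb n = -(n:ℂ) + Complex.I from rfl]
        push_cast
        simp only [Complex.ext_iff, Complex.mul_re, Complex.mul_im, Complex.add_re,
          Complex.add_im, Complex.sub_re, Complex.sub_im, Complex.I_re, Complex.I_im,
          Complex.neg_re, Complex.neg_im, Complex.intCast_re, Complex.intCast_im,
          Complex.natCast_re, Complex.natCast_im]
        constructor <;> ring
  have hq2 : ∀ m, |(PQ n f m).2| ≤ 2 := by
    intro m
    have him := im_bound n hn (fun k => f (m+k)) (fun k => hub _)
    have hTim : (T m).im = ((PQ n f m).2 : ℝ) := by
      rw [hPQ m]; simp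
    rw [hT] at hTim
    rw [hTim] at him
    have : |((PQ n f m).2 : ℝ)| < 3 := him
    have : |(PQ n f m).2| < 3 := by exact_mod_cast this
    omega
  have hqrec : ∀ m, (PQ n f (m+2)).2 + 2*(n:ℤ)*(PQ n f (m+1)).2 +
      ((n:ℤ)^2+1)*(PQ n f m).2 = -(f m) := by
    intro m
    show (PQ n f (m+2)).2 + _ + _ = _
    simp only [PQ]
    ring
  by_contra h0
  have hf0 : 2 ≤ |f 0| := (hsep 0).resolve_left h0
  have hq1 : (PQ n f 1).2 = 0 := by simp [PQ]
  have hq2v : (PQ n f 2).2 = -(f 0) := by simp [PQ]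
  have habs : |(PQ n f 2).2| = 2 := by
    have := hq2 2
    rw [hq2v] at this ⊢
    rw [abs_neg] at this ⊢
    omega
  exact arith n hn (fun m => (PQ n f m).2) hq2 hq1 habs
    (fun m => by rw [hqrec m, abs_neg]; exact hub m)

theorem expansion_inj (n : ℕ) (hn : 2 ≤ n) (D : Set ℕ) (hD : ∀ d ∈ D, d ≤ n ^ 2)
    (hsep : ∀ d ∈ D, ∀ d' ∈ D, d ≠ d' → 1 < |(d : ℤ) - (d' : ℤ)|)
    (a a' : ℕ → ℕ) (ha : ∀ k, a k ∈ D) (ha' : ∀ k, a' k ∈ D)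
    (heq : ∑' k : ℕ, (a k : ℂ) * (bb n)⁻¹ ^ (k+1) = ∑' k : ℕ, (a' k : ℂ) * (bb n)⁻¹ ^ (k+1)) :
    a = a' := by
  by_contra hne
  have hex : ∃ k, a k ≠ a' k := by
    by_contra h
    push_neg at h
    exact hne (funext h)
  set j := Nat.find hex with hjdef
  have hj : a j ≠ a' j := Nat.find_spec hex
  have hmin : ∀ i, i < j → a i = a' i := by
    intro i hi
    have := Nat.find_min hex hi
    tauto
  set e : ℕ → ℤ := fun k => (a k : ℤ) - (a' k : ℤ) with hedef
  have hbnd : ∀ (c : ℕ → ℕ), (∀ k, c k ∈ D) →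
      ∀ k, Complex.abs ((c k : ℂ)) ≤ (n:ℝ)^2 := by
    intro c hc k
    rw [Complex.abs_natCast]
    have := hD _ (hc k)
    exact_mod_cast this
  have hsa : Summable (fun k : ℕ => (a k : ℂ) * (bb n)⁻¹ ^ (k+1)) :=
    summable_aux n hn _ ((n:ℝ)^2) (hbnd a ha)
  have hsa' : Summable (fun k : ℕ => (a' k : ℂ) * (bb n)⁻¹ ^ (k+1)) :=
    summable_aux n hn _ ((n:ℝ)^2) (hbnd a' ha')
  have hfun : (fun k : ℕ => (e k : ℂ) * (bb n)⁻¹ ^ (k+1))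
      = fun k : ℕ => (a k : ℂ) * (bb n)⁻¹ ^ (k+1) - (a' k : ℂ) * (bb n)⁻¹ ^ (k+1) := by
    funext k
    rw [hedef]
    push_cast
    ring
  have hsume : Summable (fun k : ℕ => (e k : ℂ) * (bb n)⁻¹ ^ (k+1)) := by
    rw [hfun]; exact hsa.sub hsa'
  have hdiff : ∑' k : ℕ, (e k : ℂ) * (bb n)⁻¹ ^ (k+1) = 0 := by
    rw [hfun, hsa.tsum_sub hsa', heq, sub_self]
  have hsplit := hsume.sum_add_tsum_nat_add j
  have hpre : ∑ i ∈ Finset.range j, (e i : ℂ) * (bb n)⁻¹ ^ (i+1) = 0 := by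
    apply Finset.sum_eq_zero
    intro i hi
    have : e i = 0 := by
      rw [hedef]
      have := hmin i (Finset.mem_range.mp hi)
      simp [this]
    rw [this]
    simp
  have htail : ∑' i : ℕ, (e (i+j) : ℂ) * (bb n)⁻¹ ^ (i+j+1) = 0 := by
    have := hsplit
    rw [hpre, zero_add, hdiff] at this
    exact this
  have hfac : (fun i : ℕ => (e (i+j) : ℂ) * (bb n)⁻¹ ^ (i+j+1))
      = fun i : ℕ => (bb n)⁻¹ ^ j * ((e (i+j) : ℂ) * (bb n)⁻¹ ^ (i+1)) := by
    funext i
    have : i + j + 1 = (i+1) + j := by omega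
    rw [this, pow_add]
    ring
  have hS : ∑' i : ℕ, (e (i+j) : ℂ) * (bb n)⁻¹ ^ (i+1) = 0 := by
    have h2 : (bb n)⁻¹ ^ j * ∑' i : ℕ, (e (i+j) : ℂ) * (bb n)⁻¹ ^ (i+1) = 0 := by
      rw [← tsum_mul_left, ← hfac, htail]
    have hw : (bb n)⁻¹ ^ j ≠ 0 := pow_ne_zero _ (inv_ne_zero (bb_ne n))
    exact (mul_eq_zero.mp h2).resolve_left hw
  have hkey := key_unique n hn (fun i => e (i+j)) ?_ ?_ hS
  · have h0 : (a (0+j) : ℤ) - (a' (0+j) : ℤ) = 0 := hkey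
    have h0' : (a j : ℤ) = (a' j : ℤ) := by
      rw [Nat.zero_add] at h0
      linarith
    exact hj (by exact_mod_cast h0')
  · intro k
    have h1 := hD _ (ha (k+j))
    have h2 := hD _ (ha' (k+j))
    rw [hedef]
    have h1' : ((a (k+j) : ℤ)) ≤ (n:ℤ)^2 := by exact_mod_cast h1
    have h2' : ((a' (k+j) : ℤ)) ≤ (n:ℤ)^2 := by exact_mod_cast h2
    have hp1 : (0:ℤ) ≤ (a (k+j) : ℤ) := Int.natCast_nonneg _
    have hp2 : (0:ℤ) ≤ (a' (k+j) : ℤ) := Int.natCast_nonneg _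
    show |(a (k+j) : ℤ) - (a' (k+j) : ℤ)| ≤ (n:ℤ)^2
    rw [abs_le]
    constructor
    · linarith
    · linarith
  · intro k
    by_cases hc : a (k+j) = a' (k+j)
    · left; show (a (k+j) : ℤ) - (a' (k+j) : ℤ) = 0; simp [hc]
    · right
      have h := hsep _ (ha (k+j)) _ (ha' (k+j)) hc
      show 2 ≤ |(a (k+j) : ℤ) - (a' (k+j) : ℤ)|
      omega

section Topo

lemma sum_rw (n : ℕ) (a : ℕ → ℕ) :
    (∑' k : ℕ, (a k : ℂ) * (-(n : ℂ) + Complex.I) ^ (-(k + 1 : ℤ)))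
      = ∑' k : ℕ, (a k : ℂ) * (bb n)⁻¹ ^ (k+1) := by
  congr 1
  funext k
  rw [hpow]

lemma dist_bound (n : ℕ) (hn : 2 ≤ n) (c c' : ℕ → ℕ)
    (hc : ∀ k, c k ≤ n^2) (hc' : ∀ k, c' k ≤ n^2) (M : ℕ)
    (hagree : ∀ k, k < M → c k = c' k) :
    Complex.abs ((∑' k : ℕ, (c k : ℂ) * (bb n)⁻¹ ^ (k+1))
        - ∑' k : ℕ, (c' k : ℂ) * (bb n)⁻¹ ^ (k+1))
      ≤ rr n ^ M * ((n:ℝ)^2 * (rr n * (1 - rr n)⁻¹)) := by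
  have hbnd : ∀ (u : ℕ → ℕ), (∀ k, u k ≤ n^2) →
      ∀ k, Complex.abs ((u k : ℂ)) ≤ (n:ℝ)^2 := by
    intro u hu k
    rw [Complex.abs_natCast]
    exact_mod_cast hu k
  have hsc : Summable (fun k : ℕ => (c k : ℂ) * (bb n)⁻¹ ^ (k+1)) :=
    summable_aux n hn _ ((n:ℝ)^2) (hbnd c hc)
  have hsc' : Summable (fun k : ℕ => (c' k : ℂ) * (bb n)⁻¹ ^ (k+1)) :=
    summable_aux n hn _ ((n:ℝ)^2) (hbnd c' hc')
  have hgabs : ∀ k, Complex.abs ((c k : ℂ) - (c' k : ℂ)) ≤ (n:ℝ)^2 := by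
    intro k
    have h1 : ((c k : ℂ)) - (c' k : ℂ) = (((c k : ℝ) - (c' k : ℝ) : ℝ) : ℂ) := by push_cast; ring
    rw [h1, Complex.abs_ofReal, abs_sub_le_iff]
    have b1 : (c k : ℝ) ≤ (n:ℝ)^2 := by exact_mod_cast hc k
    have b2 : (c' k : ℝ) ≤ (n:ℝ)^2 := by exact_mod_cast hc' k
    have p1 : (0:ℝ) ≤ (c k : ℝ) := Nat.cast_nonneg _
    have p2 : (0:ℝ) ≤ (c' k : ℝ) := Nat.cast_nonneg _
    constructor <;> linarith
  have hfun : (fun k : ℕ => ((c k : ℂ) - (c' k : ℂ)) * (bb n)⁻¹ ^ (k+1))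
      = fun k : ℕ => (c k : ℂ) * (bb n)⁻¹ ^ (k+1) - (c' k : ℂ) * (bb n)⁻¹ ^ (k+1) := by
    funext k; ring
  have hsg : Summable (fun k : ℕ => ((c k : ℂ) - (c' k : ℂ)) * (bb n)⁻¹ ^ (k+1)) := by
    rw [hfun]; exact hsc.sub hsc'
  have hdiff : (∑' k : ℕ, (c k : ℂ) * (bb n)⁻¹ ^ (k+1))
      - (∑' k : ℕ, (c' k : ℂ) * (bb n)⁻¹ ^ (k+1))
      = ∑' k : ℕ, ((c k : ℂ) - (c' k : ℂ)) * (bb n)⁻¹ ^ (k+1) := by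
    rw [hfun, hsc.tsum_sub hsc']
  have hsplit := hsg.sum_add_tsum_nat_add M
  have hpre : ∑ i ∈ Finset.range M, ((c i : ℂ) - (c' i : ℂ)) * (bb n)⁻¹ ^ (i+1) = 0 := by
    apply Finset.sum_eq_zero
    intro i hi
    rw [hagree i (Finset.mem_range.mp hi)]
    ring
  have htail : (∑' k : ℕ, ((c k : ℂ) - (c' k : ℂ)) * (bb n)⁻¹ ^ (k+1))
      = ∑' i : ℕ, ((c (i+M) : ℂ) - (c' (i+M) : ℂ)) * (bb n)⁻¹ ^ (i+M+1) := by
    rw [← hsplit, hpre, zero_add]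
  have hfac : (fun i : ℕ => ((c (i+M) : ℂ) - (c' (i+M) : ℂ)) * (bb n)⁻¹ ^ (i+M+1))
      = fun i : ℕ => (bb n)⁻¹ ^ M * (((c (i+M) : ℂ) - (c' (i+M) : ℂ)) * (bb n)⁻¹ ^ (i+1)) := by
    funext i
    have : i + M + 1 = (i+1) + M := by omega
    rw [this, pow_add]
    ring
  rw [hdiff, htail, hfac, tsum_mul_left, map_mul, abs_w_pow]
  apply mul_le_mul_of_nonneg_left _ (pow_nonneg (rr_pos n).le _)
  exact norm_tsum_le n hn _ ((n:ℝ)^2) (fun k => hgabs (k+M))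

lemma cylinder_closed (n : ℕ) (hn : 2 ≤ n) (D : Set ℕ) (hD : ∀ d ∈ D, d ≤ n ^ 2)
    (m : ℕ) (w : Fin m → ℕ) : IsClosed (cylinder n D m w) := by
  classical
  set A : Set (ℕ → ℕ) := {a | (∀ k, a k ∈ D) ∧ ∀ i : Fin m, a i = w i} with hAdef
  have hDfin : D.Finite := Set.Finite.subset (Set.finite_Iic (n^2)) (fun d hd => hD d hd)
  have hA : IsCompact A := by
    have h1 : IsCompact (Set.pi Set.univ (fun _ : ℕ => D)) :=
      isCompact_univ_pi (fun _ => hDfin.isCompact)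
    have h2 : IsClosed {a : ℕ → ℕ | ∀ i : Fin m, a i = w i} := by
      have heq2 : {a : ℕ → ℕ | ∀ i : Fin m, a i = w i}
          = ⋂ i : Fin m, (fun a : ℕ → ℕ => a i) ⁻¹' {w i} := by
        ext a; simp
      rw [heq2]
      exact isClosed_iInter fun i => (isClosed_singleton).preimage (continuous_apply _)
    have hAeq : A = Set.pi Set.univ (fun _ : ℕ => D) ∩ {a | ∀ i : Fin m, a i = w i} := by
      ext a
      simp [hAdef, Set.mem_pi]
    rw [hAeq]
    exact h1.inter_right h2
  haveI : CompactSpace ↥A := isCompact_iff_compactSpace.mp hA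
  set ψ : ↥A → ℂ := fun a => ∑' k : ℕ, ((a : ℕ → ℕ) k : ℂ) * (bb n)⁻¹ ^ (k+1) with hψdef
  have hψ : Continuous ψ := by
    apply continuous_tsum (u := fun k : ℕ => (n:ℝ)^2 * rr n ^ (k+1))
    · intro k
      exact ((continuous_of_discreteTopology).comp
        ((continuous_apply k).comp continuous_subtype_val)).mul continuous_const
    · exact summable_geo_aux n hn ((n:ℝ)^2)
    · intro k a
      rw [Complex.norm_eq_abs, map_mul, abs_w_pow, Complex.abs_natCast]
      apply mul_le_mul_of_nonneg_right _ (pow_nonneg (rr_pos n).le _)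
      exact_mod_cast hD _ (a.2.1 k)
  have hcr : IsCompact (Set.range ψ) := isCompact_range hψ
  have hpreim : cylinder n D m w = Subtype.val ⁻¹' (Set.range ψ) := by
    ext x
    constructor
    · rintro ⟨a, ha, hprefix, hsum⟩
      refine ⟨⟨a, ha, hprefix⟩, ?_⟩
      show (∑' k : ℕ, (a k : ℂ) * (bb n)⁻¹ ^ (k+1)) = (x : ℂ)
      rw [hsum, sum_rw n a]
    · rintro ⟨⟨a, ha, hprefix⟩, heq⟩
      exact ⟨a, ha, hprefix, by rw [sum_rw n a]; exact heq.symm⟩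
  rw [hpreim]
  exact (hcr.isClosed).preimage continuous_subtype_val

lemma cylinder_open (n : ℕ) (hn : 2 ≤ n) (D : Set ℕ) (hD : ∀ d ∈ D, d ≤ n ^ 2)
    (hsep : ∀ d ∈ D, ∀ d' ∈ D, d ≠ d' → 1 < |(d : ℤ) - (d' : ℤ)|)
    (m : ℕ) (w : Fin m → ℕ) : IsOpen (cylinder n D m w) := by
  classical
  have hDfin : D.Finite := Set.Finite.subset (Set.finite_Iic (n^2)) (fun d hd => hD d hd)
  set W : Set (Fin m → ℕ) := Set.pi Set.univ (fun _ => D) with hWdef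
  have hWfin : W.Finite := Set.Finite.pi (fun _ => hDfin)
  have hcompl : (cylinder n D m w)ᶜ = ⋃ v ∈ W \ {w}, cylinder n D m v := by
    ext x
    simp only [Set.mem_compl_iff, Set.mem_iUnion, Set.mem_diff, Set.mem_singleton_iff]
    constructor
    · intro hx
      obtain ⟨a, ha, hsum⟩ := x.2
      refine ⟨fun i => a i, ⟨⟨fun i _ => ha i, ?_⟩, ⟨a, ha, fun i => rfl, hsum⟩⟩⟩
      intro hvw
      exact hx ⟨a, ha, fun i => congrFun hvw i, hsum⟩
    · rintro ⟨v, ⟨hvW, hvne⟩, hxv⟩ hxw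
      obtain ⟨a, ha, hprea, hsuma⟩ := hxv
      obtain ⟨a', ha', hprea', hsuma'⟩ := hxw
      have heq : a = a' := by
        apply expansion_inj n hn D hD hsep a a' ha ha'
        rw [← sum_rw n a, ← sum_rw n a', ← hsuma, ← hsuma']
      apply hvne
      funext i
      rw [← hprea i, heq, hprea' i]
  have hclosed : IsClosed ((cylinder n D m w)ᶜ) := by
    rw [hcompl]
    apply Set.Finite.isClosed_biUnion hWfin.diff
    intro v _
    exact cylinder_closed n hn D hD m v
  have := hclosed.isOpen_compl
  rwa [compl_compl] at this

end Topo

end Stmt8Aux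

open Stmt8Aux

/-- If `b = -n+i` with `n ≥ 2` and `D ⊆ {0,…,n²}` is separated, the cylinder
sets `0.d₁⋯d_m + b^{-m}C_D` (with `m ≥ 1` and digits in `D`) form a basis for
the subspace topology on `C_D` inherited from `ℂ`. -/
theorem stmt8 (n : ℕ) (hn : 2 ≤ n) (D : Set ℕ) (hD : ∀ d ∈ D, d ≤ n ^ 2)
    (hsep : ∀ d ∈ D, ∀ d' ∈ D, d ≠ d' → 1 < |(d : ℤ) - (d' : ℤ)|) :
    TopologicalSpace.IsTopologicalBasis
      {U : Set ↥(CDset n D) | ∃ (m : ℕ) (w : Fin (m + 1) → ℕ),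
        (∀ i, w i ∈ D) ∧ U = cylinder n D (m + 1) w} := by
  apply TopologicalSpace.isTopologicalBasis_of_isOpen_of_nhds
  · rintro U ⟨m, w, hw, rfl⟩
    exact cylinder_open n hn D hD hsep (m+1) w
  · intro x U hxU hU
    obtain ⟨a, ha, hsum⟩ := x.2
    rcases Metric.isOpen_iff.mp hU x hxU with ⟨ε, hε, hball⟩
    set B0 : ℝ := (n:ℝ)^2 * (rr n * (1 - rr n)⁻¹) with hB0
    have hrr := rr_pos n
    have hrr1 := rr_lt_one n hn
    have h1r : (0:ℝ) < 1 - rr n := by linarith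
    have hB0pos : 0 ≤ B0 := by positivity
    obtain ⟨M, hM⟩ := exists_pow_lt_of_lt_one
      (div_pos hε (by linarith : (0:ℝ) < B0 + 1)) hrr1
    refine ⟨cylinder n D (M+1) (fun i => a i),
      ⟨M, fun i => a i, fun i => ha i, rfl⟩, ⟨a, ha, fun i => rfl, hsum⟩, ?_⟩
    intro z hz
    obtain ⟨a', ha', hpre, hsum'⟩ := hz
    apply hball
    rw [Metric.mem_ball, Subtype.dist_eq, Complex.dist_eq]
    have hzx : (z:ℂ) - (x:ℂ) = (∑' k : ℕ, (a' k : ℂ) * (bb n)⁻¹^(k+1))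
        - ∑' k : ℕ, (a k : ℂ) * (bb n)⁻¹^(k+1) := by
      rw [hsum, hsum', sum_rw, sum_rw]
    rw [hzx]
    have hd := dist_bound n hn a' a (fun k => hD _ (ha' k)) (fun k => hD _ (ha k)) (M+1)
      (fun k hk => hpre ⟨k, hk⟩)
    calc Complex.abs ((∑' k : ℕ, (a' k : ℂ) * (bb n)⁻¹^(k+1))
          - ∑' k : ℕ, (a k : ℂ) * (bb n)⁻¹^(k+1))
        ≤ rr n ^ (M+1) * B0 := hd
      _ ≤ rr n ^ M * B0 := by
          apply mul_le_mul_of_nonneg_right _ hB0pos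
          calc rr n ^ (M+1) = rr n ^ M * rr n := pow_succ _ _
            _ ≤ rr n ^ M * 1 :=
                mul_le_mul_of_nonneg_left (le_of_lt hrr1) (pow_nonneg hrr.le _)
            _ = rr n ^ M := mul_one _
      _ ≤ rr n ^ M * (B0+1) := by nlinarith [pow_nonneg hrr.le M]
      _ < (ε/(B0+1)) * (B0+1) := mul_lt_mul_of_pos_right hM (by linarith)
      _ = ε := by field_simp
end

section
/- Let b = −n+i with n ≥ 2 and let D ⊆ {0,...,n²} be separated. The map g : D^ℕ → C_D defined by g((d_j)_{j≥1}) = ∑_{j=1}^∞ d_j b^{−j} is a topological conjugacy between the full shift (D^ℕ, σ) and (C_D, T_b): g is a homeomorphism and T_b ∘ g = g ∘ σ. -/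
open Filter Topology

namespace Stmt9Aux

noncomputable def bc (n : ℕ) : ℂ := -(n : ℂ) + Complex.I

noncomputable def sq (n : ℕ) : ℝ := Real.sqrt ((n : ℝ) ^ 2 + 1)

lemma bc_ne (n : ℕ) : bc n ≠ 0 := by
  intro h
  have := congrArg Complex.im h
  simp [bc] at this

lemma normSq_bc (n : ℕ) : Complex.normSq (bc n) = (n : ℝ) ^ 2 + 1 := by
  simp [bc, Complex.normSq_apply]
  ring

lemma norm_bc (n : ℕ) : ‖bc n‖ = sq n := by
  rw [Complex.norm_def, normSq_bc, sq]

lemma one_lt_sq (n : ℕ) (hn : 2 ≤ n) : 1 < sq n := by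
  have h1 : (1:ℝ) < (n:ℝ)^2 + 1 := by
    have : (2:ℝ) ≤ (n:ℝ) := by exact_mod_cast hn
    nlinarith
  have := Real.lt_sqrt (x := 1) (y := (n:ℝ)^2+1) (by norm_num)
  rw [sq]
  rw [this]
  nlinarith

lemma sq_lt (n : ℕ) (hn : 2 ≤ n) : sq n < n + 1 := by
  have h2 : (2:ℝ) ≤ (n:ℝ) := by exact_mod_cast hn
  rw [sq, Real.sqrt_lt' (by positivity)]
  nlinarith

lemma sq_sq (n : ℕ) : sq n ^ 2 = (n:ℝ)^2 + 1 := by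
  rw [sq, Real.sq_sqrt (by positivity)]

lemma r_lt_one (n : ℕ) (hn : 2 ≤ n) : (sq n)⁻¹ < 1 := by
  rw [inv_lt_one_iff₀]
  right; exact one_lt_sq n hn

lemma r_nonneg (n : ℕ) : 0 ≤ (sq n)⁻¹ := by
  rw [sq]; positivity

lemma norm_w (n k : ℕ) : ‖bc n ^ (-(k + 1 : ℤ))‖ = (sq n)⁻¹ ^ (k + 1) := by
  rw [norm_zpow, norm_bc]
  rw [show (-(k + 1 : ℤ)) = -((k + 1 : ℕ) : ℤ) by push_cast; ring]
  rw [zpow_neg, zpow_natCast, inv_pow]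

lemma summable_geom (n : ℕ) (hn : 2 ≤ n) (C : ℝ) :
    Summable (fun k : ℕ => C * (sq n)⁻¹ ^ (k + 1)) := by
  have h := (summable_geometric_of_lt_one (r_nonneg n) (r_lt_one n hn)).mul_left
    (C * (sq n)⁻¹)
  exact h.congr (fun k => by rw [pow_succ]; ring)

lemma summable_series (n : ℕ) (hn : 2 ≤ n) (c : ℕ → ℂ) (hc : ∀ k, ‖c k‖ ≤ (n:ℝ)^2) :
    Summable (fun k : ℕ => c k * bc n ^ (-(k + 1 : ℤ))) := by
  apply Summable.of_norm_bounded (summable_geom n hn ((n:ℝ)^2))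
  intro k
  rw [norm_mul, norm_w]
  exact mul_le_mul_of_nonneg_right (hc k) (pow_nonneg (r_nonneg n) _)

lemma tsum_norm_le (n : ℕ) (hn : 2 ≤ n) (c : ℕ → ℂ) (hc : ∀ k, ‖c k‖ ≤ (n:ℝ)^2) :
    ‖∑' k : ℕ, c k * bc n ^ (-(k + 1 : ℤ))‖ ≤ sq n + 1 := by
  set r := (sq n)⁻¹ with hr
  have hsum2 : Summable (fun k : ℕ => (n:ℝ)^2 * r ^ (k+1)) := summable_geom n hn _
  have h1 : ‖∑' k : ℕ, c k * bc n ^ (-(k + 1 : ℤ))‖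
      ≤ ∑' k : ℕ, ‖c k * bc n ^ (-(k + 1 : ℤ))‖ := by
    apply norm_tsum_le_tsum_norm
    apply hsum2.of_nonneg_of_le (fun k => norm_nonneg _)
    intro k
    rw [norm_mul, norm_w]
    exact mul_le_mul_of_nonneg_right (hc k) (pow_nonneg (r_nonneg n) _)
  have h2 : ∑' k : ℕ, ‖c k * bc n ^ (-(k + 1 : ℤ))‖
      ≤ ∑' k : ℕ, (n:ℝ)^2 * r ^ (k+1) := by
    apply Summable.tsum_le_tsum _ _ hsum2
    · intro k
      rw [norm_mul, norm_w]
      exact mul_le_mul_of_nonneg_right (hc k) (pow_nonneg (r_nonneg n) _)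
    · apply hsum2.of_nonneg_of_le (fun k => norm_nonneg _)
      intro k
      rw [norm_mul, norm_w]
      exact mul_le_mul_of_nonneg_right (hc k) (pow_nonneg (r_nonneg n) _)
  have h3 : ∑' k : ℕ, (n:ℝ)^2 * r ^ (k+1) = ((n:ℝ)^2 * r) * (1 - r)⁻¹ := by
    rw [show (fun k : ℕ => (n:ℝ)^2 * r ^ (k+1)) = fun k : ℕ => ((n:ℝ)^2 * r) * r ^ k from
      funext fun k => by rw [pow_succ]; ring]
    rw [tsum_mul_left, tsum_geometric_of_lt_one (r_nonneg n) (r_lt_one n hn)]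
  have hs1 : 1 < sq n := one_lt_sq n hn
  have hs0 : sq n ≠ 0 := by positivity
  have hs2 : sq n - 1 ≠ 0 := by intro h; nlinarith
  have h4 : ((n:ℝ)^2 * r) * (1 - r)⁻¹ = sq n + 1 := by
    have hn2 : (n:ℝ)^2 = sq n ^ 2 - 1 := by rw [sq_sq]; ring
    rw [hn2, hr]
    field_simp
    ring
  linarith [h1, h2, le_of_eq h3]

/-- The key shift identity for the series. -/
lemma shift_eq (n : ℕ) (hn : 2 ≤ n) (c : ℕ → ℂ) (hc : ∀ k, ‖c k‖ ≤ (n:ℝ)^2) :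
    (∑' k : ℕ, c (k + 1) * bc n ^ (-(k + 1 : ℤ)))
      = bc n * (∑' k : ℕ, c k * bc n ^ (-(k + 1 : ℤ))) - c 0 := by
  have hb := bc_ne n
  have h := Summable.tsum_eq_zero_add (summable_series n hn c hc)
  have h2 : ∀ k : ℕ, c (k + 1) * bc n ^ (-((k + 1 : ℕ) + 1 : ℤ))
      = (bc n)⁻¹ * (c (k + 1) * bc n ^ (-(k + 1 : ℤ))) := by
    intro k
    rw [show (-((k + 1 : ℕ) + 1 : ℤ)) = (-1) + (-(k + 1 : ℤ)) by push_cast; ring,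
      zpow_add₀ hb, zpow_neg_one]
    ring
  rw [tsum_congr h2, tsum_mul_left] at h
  rw [h]
  rw [show (-((0:ℕ) + 1 : ℤ)) = (-1 : ℤ) by norm_num, zpow_neg_one]
  field_simp
  ring

/-- Integer state sequence -/
def sx (n : ℤ) (e : ℕ → ℤ) : ℕ → ℤ × ℤ
  | 0 => (0, 0)
  | t + 1 => (-n * (sx n e t).1 - (sx n e t).2 + e t, (sx n e t).1 - n * (sx n e t).2)

/-- The finite-state argument: a state with imaginary part ≥ 2 is very constrained. -/
lemma keyP (n : ℤ) (hn : 2 ≤ n) (x y : ℕ → ℤ)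
    (hrec : ∀ t, y (t + 1) = x t - n * y t)
    (hN : ∀ t, (x t) ^ 2 + (y t) ^ 2 ≤ n ^ 2 + 2 * n + 3)
    (t : ℕ) (hy : 2 ≤ y t) : x t = n ∧ y t = 2 ∧ y (t + 1) = -n := by
  have hy2 : 4 ≤ (y t) ^ 2 := by nlinarith
  have hxu : x t ≤ n := by
    by_contra h
    push_neg at h
    have h1 : n + 1 ≤ x t := h
    have h2 : (n + 1) ^ 2 ≤ (x t) ^ 2 := by nlinarith
    nlinarith [hN t]
  have hxl : -n ≤ x t := by
    by_contra h
    push_neg at h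
    have h1 : n + 1 ≤ -(x t) := by linarith
    have h2 : (n + 1) ^ 2 ≤ (x t) ^ 2 := by nlinarith
    nlinarith [hN t]
  have hyn : y (t + 1) ≤ -n := by
    have h1 := hrec t
    have h2 : n * 2 ≤ n * y t := by nlinarith
    linarith
  have hyl : -(n + 1) ≤ y (t + 1) := by
    by_contra h
    push_neg at h
    have h1 : n + 2 ≤ -(y (t + 1)) := by linarith
    have h2 : (n + 2) ^ 2 ≤ (y (t + 1)) ^ 2 := by nlinarith
    nlinarith [hN (t + 1), sq_nonneg (x (t + 1))]
  have hcase : y (t + 1) = -n := by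
    rcases eq_or_lt_of_le hyl with heq | hlt
    · exfalso
      have hysq : (y (t + 1)) ^ 2 = (n + 1) ^ 2 := by rw [← heq]; ring
      have hx1 : (x (t + 1)) ^ 2 ≤ 2 := by nlinarith [hN (t + 1)]
      have hx1l : -1 ≤ x (t + 1) := by nlinarith [sq_nonneg (x (t + 1) + 2)]
      have hmy : n * y (t + 1) = -(n ^ 2 + n) := by rw [← heq]; ring
      have hy2' : n ^ 2 + n - 1 ≤ y (t + 2) := by
        have h1 : y (t + 2) = x (t + 1) - n * y (t + 1) := hrec (t + 1)
        linarith
      have hge : n + 2 ≤ y (t + 2) := by nlinarith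
      have h2 : (n + 2) ^ 2 ≤ (y (t + 2)) ^ 2 := by nlinarith
      nlinarith [hN (t + 2), sq_nonneg (x (t + 2))]
    · have := Int.lt_iff_add_one_le.mp hlt
      linarith
  have hx : x t = n * y t - n := by
    have h1 := hrec t
    rw [hcase] at h1
    linarith
  have hyt : y t = 2 := by
    have h2 : n * (y t - 1) ≤ n := by nlinarith
    have h3 : y t ≤ 2 := by nlinarith
    linarith
  refine ⟨by rw [hx, hyt]; ring, hyt, hcase⟩


lemma core (n : ℕ) (hn : 2 ≤ n) (e : ℕ → ℤ)
    (he : ∀ j, |e j| ≤ (n : ℤ) ^ 2) (h0 : 2 ≤ e 0)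
    (hz : ∑' j : ℕ, ((e j : ℤ) : ℂ) * bc n ^ (-(j + 1 : ℤ)) = 0) : False := by
  have hnc : ∀ t j : ℕ, ‖((e (t + j) : ℤ) : ℂ)‖ ≤ (n : ℝ) ^ 2 := by
    intro t j
    rw [Complex.norm_intCast]
    exact_mod_cast he (t + j)
  have hrec : ∀ t : ℕ, (∑' j : ℕ, ((e ((t + 1) + j) : ℤ) : ℂ) * bc n ^ (-(j + 1 : ℤ)))
      = bc n * (∑' j : ℕ, ((e (t + j) : ℤ) : ℂ) * bc n ^ (-(j + 1 : ℤ))) - ((e t : ℤ) : ℂ) := by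
    intro t
    have h := shift_eq n hn (fun j => ((e (t + j) : ℤ) : ℂ)) (hnc t)
    have harg : (fun k : ℕ => ((e (t + (k + 1)) : ℤ) : ℂ) * bc n ^ (-(k + 1 : ℤ)))
        = fun k : ℕ => ((e ((t + 1) + k) : ℤ) : ℂ) * bc n ^ (-(k + 1 : ℤ)) :=
      funext fun k => by rw [show t + (k + 1) = (t + 1) + k by ring]
    rw [harg] at h
    simpa using h
  have hX : ∀ t : ℕ, (((sx (n : ℤ) e t).1 : ℂ) + ((sx (n : ℤ) e t).2 : ℂ) * Complex.I)
      = - ∑' j : ℕ, ((e (t + j) : ℤ) : ℂ) * bc n ^ (-(j + 1 : ℤ)) := by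
    intro t
    induction t with
    | zero =>
      have h0' : (∑' j : ℕ, ((e (0 + j) : ℤ) : ℂ) * bc n ^ (-(j + 1 : ℤ))) = 0 := by
        rw [show (fun j : ℕ => ((e (0 + j) : ℤ) : ℂ) * bc n ^ (-(j + 1 : ℤ)))
            = fun j : ℕ => ((e j : ℤ) : ℂ) * bc n ^ (-(j + 1 : ℤ)) from
          funext fun j => by rw [zero_add]]
        exact hz
      rw [h0']
      simp [sx]
    | succ t ih =>
      rw [hrec t]
      have htt : (∑' j : ℕ, ((e (t + j) : ℤ) : ℂ) * bc n ^ (-(j + 1 : ℤ)))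
          = -(((sx (n : ℤ) e t).1 : ℂ) + ((sx (n : ℤ) e t).2 : ℂ) * Complex.I) := by
        linear_combination ih
      rw [htt]
      simp only [sx, bc]
      push_cast
      linear_combination (-((sx (n : ℤ) e t).2 : ℂ)) * Complex.I_sq
  have hN : ∀ t : ℕ, ((sx (n : ℤ) e t).1) ^ 2 + ((sx (n : ℤ) e t).2) ^ 2
      ≤ (n : ℤ) ^ 2 + 2 * n + 3 := by
    intro t
    have hb : ‖∑' j : ℕ, ((e (t + j) : ℤ) : ℂ) * bc n ^ (-(j + 1 : ℤ))‖ ≤ sq n + 1 :=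
      tsum_norm_le n hn _ (hnc t)
    set x := (sx (n : ℤ) e t).1 with hxdef
    set y := (sx (n : ℤ) e t).2 with hydef
    have hxy : ‖((x : ℂ) + (y : ℂ) * Complex.I)‖ ≤ sq n + 1 := by
      rw [hX t]; simpa [norm_neg] using hb
    have h1 : Complex.normSq ((x : ℂ) + (y : ℂ) * Complex.I) = ((x : ℝ)) ^ 2 + ((y : ℝ)) ^ 2 := by
      rw [show ((x : ℂ)) = (((x : ℝ) : ℂ)) by push_cast; rfl,
        show ((y : ℂ)) = (((y : ℝ) : ℂ)) by push_cast; rfl, Complex.normSq_add_mul_I]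
    have h2 : ‖((x : ℂ) + (y : ℂ) * Complex.I)‖ ^ 2 ≤ (sq n + 1) ^ 2 :=
      pow_le_pow_left₀ (norm_nonneg _) hxy 2
    rw [Complex.sq_norm, h1] at h2
    have hs1 : 1 < sq n := one_lt_sq n hn
    have hlt : ((x : ℝ)) ^ 2 + ((y : ℝ)) ^ 2 < (n : ℝ) ^ 2 + 2 * n + 4 := by
      nlinarith [sq_sq n, sq_lt n hn]
    have hcast : ((x ^ 2 + y ^ 2 : ℤ) : ℝ) < (((n : ℤ) ^ 2 + 2 * n + 4 : ℤ) : ℝ) := by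
      push_cast
      linarith
    have h4 : x ^ 2 + y ^ 2 < (n : ℤ) ^ 2 + 2 * n + 4 := by exact_mod_cast hcast
    linarith
  set xf : ℕ → ℤ := fun t => (sx (n : ℤ) e t).1 with hxf
  set yf : ℕ → ℤ := fun t => (sx (n : ℤ) e t).2 with hyf
  have hyrec : ∀ t, yf (t + 1) = xf t - (n : ℤ) * yf t := fun t => by
    simp [hxf, hyf, sx]
  have hxrec : ∀ t, xf (t + 1) = -(n : ℤ) * xf t - yf t + e t := fun t => by
    simp [hxf, hyf, sx]
  have hx1 : xf 1 = e 0 := by simp [hxf, sx]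
  have hy1 : yf 1 = 0 := by simp [hyf, sx]
  have hy2e : yf 2 = e 0 := by
    have h := hyrec 1
    rw [hx1, hy1] at h
    simpa using h
  have hnz : (2 : ℤ) ≤ (n : ℤ) := by exact_mod_cast hn
  obtain ⟨hx2, hy2, hy3⟩ := keyP (n : ℤ) hnz xf yf hyrec hN 2 (by rw [hy2e]; exact h0)
  have hy3' : yf 3 = -(n : ℤ) := hy3
  obtain ⟨hx3, hy3n, -⟩ := keyP (n : ℤ) hnz (fun t => -xf t) (fun t => -yf t)
    (fun t => by linear_combination - hyrec t)
    (fun t => by have h := hN t; show (-xf t) ^ 2 + (-yf t) ^ 2 ≤ _; simpa [neg_sq] using h)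
    3 (by show (2:ℤ) ≤ -yf 3; rw [hy3']; linarith)
  have hn2 : (n : ℤ) = 2 := by
    have hy3n' : -yf 3 = 2 := hy3n
    rw [hy3'] at hy3n'
    linarith
  have he0 : e 0 = 2 := by rw [← hy2e, hy2]
  have he1 : e 1 = xf 2 + (n : ℤ) * xf 1 + yf 1 := by
    have h := hxrec 1
    linarith
  have h6 : e 1 = 6 := by
    rw [he1, hx2, hx1, hy1, hn2, he0]; ring
  have hle := (abs_le.mp (he 1)).2
  rw [hn2] at hle
  rw [h6] at hle
  norm_num at hle

end Stmt9Aux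

open Stmt9Aux in
/-- If `b = -n+i` with `n ≥ 2` and `D ⊆ {0,…,n²}` is separated, then the
digit-evaluation map `g((d_j)) = ∑ d_j b^{-j}` is a topological conjugacy
between the full shift `(D^ℕ, σ)` and `(C_D, T_b)`: it is a homeomorphism
intertwining the left shift with `T_b` (note `T_b(z) = b·z - d₁` on the
point with unique `D`-digit expansion `0.d₁d₂⋯`). -/
theorem stmt9 (n : ℕ) (hn : 2 ≤ n) (D : Set ℕ) (hD : ∀ d ∈ D, d ≤ n ^ 2)
    (hsep : ∀ d ∈ D, ∀ d' ∈ D, d ≠ d' → 1 < |(d : ℤ) - (d' : ℤ)|) :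
    ∃ g : (ℕ → ↥D) ≃ₜ ↥(CDset n D),
      (∀ a : ℕ → ↥D, (g a : ℂ) =
        ∑' k : ℕ, ((a k : ℕ) : ℂ) * (-(n : ℂ) + Complex.I) ^ (-(k + 1 : ℤ))) ∧
      (∀ a : ℕ → ↥D,
        (g (fun k => a (k + 1)) : ℂ) =
          (-(n : ℂ) + Complex.I) * (g a : ℂ) - ((a 0 : ℕ) : ℂ)) := by
  haveI hDfin : Finite ↥D :=
    Set.Finite.to_subtype ((Set.finite_Iic (n ^ 2)).subset (fun d hd => hD d hd))
  have hnormdig : ∀ (a : ℕ → ↥D) (k : ℕ), ‖((a k : ℕ) : ℂ)‖ ≤ (n : ℝ) ^ 2 := by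
    intro a k
    rw [Complex.norm_natCast]
    exact_mod_cast hD _ (a k).2
  set F : (ℕ → ↥D) → ℂ :=
    fun a => ∑' k : ℕ, ((a k : ℕ) : ℂ) * bc n ^ (-(k + 1 : ℤ)) with hFdef
  have hsummableF : ∀ a : ℕ → ↥D,
      Summable (fun k : ℕ => ((a k : ℕ) : ℂ) * bc n ^ (-(k + 1 : ℤ))) :=
    fun a => summable_series n hn _ (hnormdig a)
  have hmem : ∀ a : ℕ → ↥D, F a ∈ CDset n D := by
    intro a
    exact ⟨fun k => (a k : ℕ), fun k => (a k).2, rfl⟩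
  have hinj : Function.Injective F := by
    intro a a' hEq
    by_contra hne
    have hex : ∃ k, a k ≠ a' k := Function.ne_iff.mp hne
    set K := Nat.find hex with hKdef
    have hK : a K ≠ a' K := Nat.find_spec hex
    have hmin : ∀ m, m < K → a m = a' m := by
      intro m hm
      by_contra h
      exact Nat.find_min hex hm h
    set g : ℕ → ℂ :=
      fun k => (((a k : ℕ) : ℂ) - ((a' k : ℕ) : ℂ)) * bc n ^ (-(k + 1 : ℤ)) with hgdef
    have hgsummable : Summable g := by
      have h1 : g = fun k => ((a k : ℕ) : ℂ) * bc n ^ (-(k + 1 : ℤ))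
          - ((a' k : ℕ) : ℂ) * bc n ^ (-(k + 1 : ℤ)) :=
        funext fun k => by rw [hgdef]; ring
      rw [h1]
      exact (hsummableF a).sub (hsummableF a')
    have hgtotal : ∑' k : ℕ, g k = 0 := by
      have h1 : g = fun k => ((a k : ℕ) : ℂ) * bc n ^ (-(k + 1 : ℤ))
          - ((a' k : ℕ) : ℂ) * bc n ^ (-(k + 1 : ℤ)) :=
        funext fun k => by rw [hgdef]; ring
      rw [h1, Summable.tsum_sub (hsummableF a) (hsummableF a')]
      rw [sub_eq_zero]
      exact hEq
    have hsplit := Summable.sum_add_tsum_nat_add (f := g) K hgsummable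
    have hfin : ∑ i ∈ Finset.range K, g i = 0 := by
      apply Finset.sum_eq_zero
      intro i hi
      rw [hgdef]
      simp only
      rw [hmin i (Finset.mem_range.mp hi)]
      ring
    have htail : ∑' i : ℕ, g (i + K) = 0 := by
      rw [hfin, hgtotal] at hsplit
      simpa using hsplit
    set e : ℕ → ℤ := fun j => ((a (j + K) : ℕ) : ℤ) - ((a' (j + K) : ℕ) : ℤ) with hedef
    have hrw : ∀ i : ℕ, g (i + K) = bc n ^ (-(K : ℤ)) * (((e i : ℤ) : ℂ) * bc n ^ (-(i + 1 : ℤ))) := by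
      intro i
      rw [hgdef, hedef]
      simp only
      rw [show (-((i + K : ℕ) + 1 : ℤ)) = (-(K : ℤ)) + (-(i + 1 : ℤ)) by push_cast; ring,
        zpow_add₀ (bc_ne n)]
      push_cast
      ring
    have hze : ∑' i : ℕ, ((e i : ℤ) : ℂ) * bc n ^ (-(i + 1 : ℤ)) = 0 := by
      rw [tsum_congr hrw, tsum_mul_left] at htail
      exact (mul_eq_zero.mp htail).resolve_left (zpow_ne_zero _ (bc_ne n))
    have hebd : ∀ j, |e j| ≤ (n : ℤ) ^ 2 := by
      intro j
      have h1 : ((a (j + K) : ℕ) : ℤ) ≤ (n : ℤ) ^ 2 := by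
        exact_mod_cast hD _ (a (j + K)).2
      have h2 : ((a' (j + K) : ℕ) : ℤ) ≤ (n : ℤ) ^ 2 := by
        exact_mod_cast hD _ (a' (j + K)).2
      have h3 : (0 : ℤ) ≤ ((a (j + K) : ℕ) : ℤ) := Int.natCast_nonneg _
      have h4 : (0 : ℤ) ≤ ((a' (j + K) : ℕ) : ℤ) := Int.natCast_nonneg _
      rw [hedef]
      simp only
      rw [abs_le]
      constructor <;> linarith
    have hKne : ((a K : ℕ) : ℤ) ≠ ((a' K : ℕ) : ℤ) := by
      intro h
      exact hK (Subtype.ext (by exact_mod_cast h))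
    have hsep0 : 1 < |e 0| := by
      have := hsep (a K) (a K).2 (a' K) (a' K).2 (fun h => hKne (by exact_mod_cast h))
      rw [hedef]
      simpa using this
    rcases le_or_gt 0 (e 0) with hpos | hneg
    · have h2 : 2 ≤ e 0 := by
        rw [abs_of_nonneg hpos] at hsep0
        linarith
      exact core n hn e hebd h2 hze
    · have h2 : 2 ≤ (fun j => -e j) 0 := by
        simp only
        rw [abs_of_neg hneg] at hsep0
        linarith
      apply core n hn (fun j => -e j) (fun j => by rw [abs_neg]; exact hebd j) h2
      have hneg2 : ∀ i : ℕ, (((-e i : ℤ)) : ℂ) * bc n ^ (-(i + 1 : ℤ))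
          = -(((e i : ℤ) : ℂ) * bc n ^ (-(i + 1 : ℤ))) := by
        intro i
        push_cast
        ring
      rw [tsum_congr hneg2, tsum_neg, hze, neg_zero]
  have hsurj : ∀ z : ↥(CDset n D), ∃ a : ℕ → ↥D, F a = (z : ℂ) := by
    rintro ⟨z, a, ha, rfl⟩
    exact ⟨fun k => ⟨a k, ha k⟩, rfl⟩
  let E : (ℕ → ↥D) ≃ ↥(CDset n D) :=
    Equiv.ofBijective (fun a => (⟨F a, hmem a⟩ : ↥(CDset n D)))
      ⟨fun a a' h => hinj (congrArg Subtype.val h),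
       fun z => by obtain ⟨a, ha⟩ := hsurj z; exact ⟨a, Subtype.ext ha⟩⟩
  have hcont : Continuous (⇑E) := by
    apply Continuous.subtype_mk
    apply continuous_tsum (u := fun k : ℕ => (n : ℝ) ^ 2 * (Stmt9Aux.sq n)⁻¹ ^ (k + 1))
    · intro k
      have h1 : Continuous fun x : ℕ → ↥D => ((x k : ℕ) : ℂ) :=
        (continuous_of_discreteTopology (f := fun d : ↥D => ((d : ℕ) : ℂ))).comp
          (continuous_apply k)
      exact h1.mul continuous_const
    · exact summable_geom n hn _
    · intro k a
      rw [norm_mul, norm_w]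
      exact mul_le_mul_of_nonneg_right (hnormdig a k) (pow_nonneg (r_nonneg n) _)
  refine ⟨hcont.homeoOfEquivCompactToT2, fun a => rfl, ?_⟩
  intro a
  exact shift_eq n hn (fun k => ((a k : ℕ) : ℂ)) (hnormdig a)
end

section
/- Let b = −n+i with n ≥ 3. For each positive integer m, any ball in ℂ of diameter at most |b|^{−m}·diam(S) intersects at most M of the m-tiles, where M is a constant independent of m (one may take M to be the maximal number of Gaussian-integer translates g + S, g ∈ ℤ[i], that a ball of diameter diam(S) can intersect, which is finite). -/
open Filter Topology

/-- The `m`-tile `0.d₁⋯d_m + b^{-m}S` in base `b = -n+i`. -/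
noncomputable def tile (n m : ℕ) (w : Fin m → ℕ) : Set ℂ :=
  {z | ∃ a : ℕ → ℕ, (∀ k, a k ≤ n ^ 2) ∧ (∀ i : Fin m, a i = w i) ∧
    z = ∑' k : ℕ, (a k : ℂ) * (-(n : ℂ) + Complex.I) ^ (-(k + 1 : ℤ))}

/-- The full fundamental set `S = C_{Λ_b}` is the `0`-tile. -/
noncomputable def Sset (n : ℕ) : Set ℂ := tile n 0 (fun i => i.elim0)

namespace Stmt12Aux

/-- The base as a complex number. -/
noncomputable def bc (n : ℕ) : ℂ := -(n : ℂ) + Complex.I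

/-- The base as a Gaussian integer. -/
def bg (n : ℕ) : GaussianInt := ⟨-(n : ℤ), 1⟩

/-- The Gaussian integer `∑ w_i b^(m-1-i)`. -/
def psi (n : ℕ) {m : ℕ} (w : Fin m → ℕ) : GaussianInt :=
  ∑ i : Fin m, (w i : GaussianInt) * bg n ^ (m - 1 - (i : ℕ))

lemma toComplex_bg (n : ℕ) : GaussianInt.toComplex (bg n) = bc n := by
  apply Complex.ext <;> simp [bg, bc, GaussianInt.toComplex_def]

lemma normSq_bc (n : ℕ) : Complex.normSq (bc n) = n ^ 2 + 1 := by
  simp [bc, Complex.normSq_apply]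
  ring

lemma one_lt_abs_bc (n : ℕ) (hn : 3 ≤ n) : 1 < ‖bc n‖ := by
  by_contra h
  push_neg at h
  have h2 : ‖bc n‖ ^ 2 ≤ 1 := pow_le_one₀ (norm_nonneg _) h
  rw [Complex.sq_norm, normSq_bc] at h2
  have : (3:ℝ) ≤ n := by exact_mod_cast hn
  nlinarith

lemma bc_ne_zero (n : ℕ) (hn : 3 ≤ n) : bc n ≠ 0 := by
  intro h
  have := one_lt_abs_bc n hn
  rw [h, norm_zero] at this; linarith

lemma bg_ne_zero (n : ℕ) (hn : 3 ≤ n) : bg n ≠ 0 := by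
  intro h
  have : (bg n).im = 0 := by rw [h]; rfl
  simp [bg] at this

lemma dvd_int (n : ℕ) {c : ℤ} (h : bg n ∣ (c : GaussianInt)) : ((n : ℤ) ^ 2 + 1) ∣ c := by
  obtain ⟨q, hq⟩ := h
  have hre : c = -(n:ℤ) * q.re + (-1) * 1 * q.im := by
    have := congrArg Zsqrtd.re hq
    simpa [bg, Zsqrtd.re_mul] using this
  have him : (0:ℤ) = -(n:ℤ) * q.im + 1 * q.re := by
    have := congrArg Zsqrtd.im hq
    simpa [bg, Zsqrtd.im_mul] using this
  refine ⟨-q.im, ?_⟩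
  have : q.re = (n:ℤ) * q.im := by linarith
  rw [hre, this]; ring

lemma psi_succ (n m : ℕ) (w : Fin (m + 1) → ℕ) :
    psi n w = bg n * psi n (Fin.init w) + (w (Fin.last m) : GaussianInt) := by
  rw [psi, psi, Fin.sum_univ_castSucc, Finset.mul_sum]
  congr 1
  · refine Finset.sum_congr rfl fun i _ => ?_
    have hi : (i : ℕ) < m := i.isLt
    have : m + 1 - 1 - (i.castSucc : ℕ) = (m - 1 - (i : ℕ)) + 1 := by
      simp [Fin.coe_castSucc]; omega
    rw [this, Fin.init, pow_succ]
    ring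
  · simp

lemma toComplex_psi (n : ℕ) {m : ℕ} (w : Fin m → ℕ) :
    GaussianInt.toComplex (psi n w) = ∑ i : Fin m, (w i : ℂ) * bc n ^ (m - 1 - (i : ℕ)) := by
  rw [psi, map_sum]
  refine Finset.sum_congr rfl fun i _ => ?_
  rw [map_mul, map_pow, toComplex_bg, map_natCast]

lemma psi_inj (n : ℕ) (hn : 3 ≤ n) : ∀ (m : ℕ) (w w' : Fin m → ℕ),
    (∀ i, w i ≤ n ^ 2) → (∀ i, w' i ≤ n ^ 2) → psi n w = psi n w' → w = w' := by
  intro m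
  induction m with
  | zero => intro w w' _ _ _; funext i; exact i.elim0
  | succ m ih =>
    intro w w' hw hw' h
    rw [psi_succ, psi_succ] at h
    -- last digits equal
    have hdvd : bg n ∣ (((w (Fin.last m) : ℤ) - (w' (Fin.last m) : ℤ) : ℤ) : GaussianInt) := by
      refine ⟨psi n (Fin.init w') - psi n (Fin.init w), ?_⟩
      push_cast
      linear_combination h
    have hd2 := dvd_int n hdvd
    have hlast : w (Fin.last m) = w' (Fin.last m) := by
      obtain ⟨t, ht⟩ := hd2
      have h1 : ((w (Fin.last m) : ℤ)) ≤ (n:ℤ)^2 := by exact_mod_cast hw (Fin.last m)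
      have h2 : ((w' (Fin.last m) : ℤ)) ≤ (n:ℤ)^2 := by exact_mod_cast hw' (Fin.last m)
      have h3 : (0:ℤ) ≤ (w (Fin.last m) : ℤ) := Int.natCast_nonneg _
      have h4 : (0:ℤ) ≤ (w' (Fin.last m) : ℤ) := Int.natCast_nonneg _
      have ht0 : t = 0 := by nlinarith [sq_nonneg ((n:ℤ))]
      rw [ht0, mul_zero, sub_eq_zero] at ht
      exact_mod_cast ht
    have hinit : Fin.init w = Fin.init w' := by
      apply ih _ _ (fun i => hw _) (fun i => hw' _)
      have : (w (Fin.last m) : GaussianInt) = (w' (Fin.last m) : GaussianInt) := by rw [hlast]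
      rw [this] at h
      have := add_right_cancel h
      exact mul_left_cancel₀ (bg_ne_zero n hn) this
    rw [← Fin.snoc_init_self w, ← Fin.snoc_init_self w', hinit, hlast]

lemma summable_digits (n : ℕ) (hn : 3 ≤ n) (a : ℕ → ℕ) (ha : ∀ k, a k ≤ n ^ 2) :
    Summable (fun k : ℕ => (a k : ℂ) * bc n ^ (-(k + 1 : ℤ))) := by
  set r : ℝ := (‖bc n‖)⁻¹ with hr
  have hb := one_lt_abs_bc n hn
  have hr0 : 0 ≤ r := by positivity
  have hr1 : r < 1 := inv_lt_one_of_one_lt₀ hb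
  have hgeom : Summable (fun k : ℕ => ((n:ℝ)^2 * r) * r ^ k) :=
    (summable_geometric_of_lt_one hr0 hr1).mul_left _
  refine Summable.of_norm_bounded hgeom fun k => ?_
  have h1 : ‖(a k : ℂ) * bc n ^ (-(k + 1 : ℤ))‖ = (a k : ℝ) * r ^ (k+1) := by
    rw [norm_mul, Complex.norm_natCast, norm_zpow]
    congr 1
    rw [hr, zpow_neg, ← inv_zpow]
    norm_cast
  rw [h1]
  have h2 : (a k : ℝ) ≤ (n:ℝ)^2 := by exact_mod_cast ha k
  calc (a k : ℝ) * r ^ (k+1) ≤ (n:ℝ)^2 * r ^ (k+1) := by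
        apply mul_le_mul_of_nonneg_right h2 (by positivity)
    _ = ((n:ℝ)^2 * r) * r ^ k := by ring

lemma zero_mem_Sset (n : ℕ) : (0:ℂ) ∈ Sset n := by
  refine ⟨fun _ => 0, fun k => by positivity, fun i => i.elim0, ?_⟩
  simp

lemma Sset_bounded (n : ℕ) (hn : 3 ≤ n) : Bornology.IsBounded (Sset n) := by
  set r : ℝ := (‖bc n‖)⁻¹ with hr
  have hb := one_lt_abs_bc n hn
  have hr0 : 0 ≤ r := by positivity
  have hr1 : r < 1 := inv_lt_one_of_one_lt₀ hb
  have hgeom : Summable (fun k : ℕ => ((n:ℝ)^2 * r) * r ^ k) :=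
    (summable_geometric_of_lt_one hr0 hr1).mul_left _
  rw [Metric.isBounded_iff_subset_closedBall 0]
  refine ⟨∑' k : ℕ, ((n:ℝ)^2 * r) * r ^ k, ?_⟩
  rintro z ⟨a, ha, -, rfl⟩
  rw [Metric.mem_closedBall, dist_zero_right]
  have hsum := summable_digits n hn a ha
  have hbound : ∀ k : ℕ, ‖(a k : ℂ) * bc n ^ (-(k + 1 : ℤ))‖ ≤ ((n:ℝ)^2 * r) * r ^ k := by
    intro k
    have h1 : ‖(a k : ℂ) * bc n ^ (-(k + 1 : ℤ))‖ = (a k : ℝ) * r ^ (k+1) := by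
      rw [norm_mul, Complex.norm_natCast, norm_zpow]
      congr 1
      rw [hr, zpow_neg, ← inv_zpow]
      norm_cast
    rw [h1]
    have h2 : (a k : ℝ) ≤ (n:ℝ)^2 := by exact_mod_cast ha k
    calc (a k : ℝ) * r ^ (k+1) ≤ (n:ℝ)^2 * r ^ (k+1) := by
          apply mul_le_mul_of_nonneg_right h2 (by positivity)
      _ = ((n:ℝ)^2 * r) * r ^ k := by ring
  calc ‖∑' k : ℕ, (a k : ℂ) * bc n ^ (-(k + 1 : ℤ))‖
      ≤ ∑' k : ℕ, ‖(a k : ℂ) * bc n ^ (-(k + 1 : ℤ))‖ :=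
        norm_tsum_le_tsum_norm (hsum.norm)
    _ ≤ ∑' k : ℕ, ((n:ℝ)^2 * r) * r ^ k := Summable.tsum_le_tsum hbound hsum.norm hgeom

lemma abs_le_of_mem_Sset (n : ℕ) (hn : 3 ≤ n) {s : ℂ} (hs : s ∈ Sset n) :
    ‖s‖ ≤ Metric.diam (Sset n) := by
  have := Metric.dist_le_diam_of_mem (Sset_bounded n hn) hs (zero_mem_Sset n)
  rwa [Complex.dist_eq, sub_zero] at this

lemma tile_decomp (n : ℕ) (hn : 3 ≤ n) (m : ℕ) (w : Fin m → ℕ) (z : ℂ)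
    (hz : z ∈ tile n m w) :
    ∃ s ∈ Sset n, bc n ^ m * z = GaussianInt.toComplex (psi n w) + s := by
  obtain ⟨a, ha, haw, rfl⟩ := hz
  have hb0 := bc_ne_zero n hn
  set f : ℕ → ℂ := fun k => (a k : ℂ) * bc n ^ ((m : ℤ) - (k + 1)) with hf
  have hfs : Summable f := by
    have := (summable_digits n hn a ha).mul_left (bc n ^ (m:ℤ))
    refine this.congr fun k => ?_
    rw [hf]
    simp only
    rw [show ((m:ℤ) - ((k:ℤ) + 1)) = (m:ℤ) + (-((k:ℤ)+1)) by ring, zpow_add₀ hb0]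
    ring
  have hmain : bc n ^ m * (∑' k : ℕ, (a k : ℂ) * bc n ^ (-(k + 1 : ℤ))) = ∑' k, f k := by
    rw [← tsum_mul_left]
    congr 1
    funext k
    rw [hf]
    simp only
    rw [← zpow_natCast (bc n) m,
      show ((m:ℤ) - ((k:ℤ) + 1)) = (m:ℤ) + (-((k:ℤ)+1)) by ring, zpow_add₀ hb0]
    ring
  refine ⟨∑' k : ℕ, (a (k + m) : ℂ) * bc n ^ (-(k + 1 : ℤ)), ?_, ?_⟩
  · exact ⟨fun k => a (k + m), fun k => ha _, fun i => i.elim0, rfl⟩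
  · rw [show (-(n:ℂ) + Complex.I) = bc n from rfl, hmain,
      ← Summable.sum_add_tsum_nat_add m hfs]
    congr 1
    · -- head sum equals toComplex psi
      rw [toComplex_psi, ← Fin.sum_univ_eq_sum_range f m]
      refine Finset.sum_congr rfl fun i _ => ?_
      rw [hf]
      simp only
      rw [haw i]
      congr 1
      have hi : (i : ℕ) < m := i.isLt
      have : ((m : ℤ) - ((i : ℕ) + 1)) = ((m - 1 - (i:ℕ) : ℕ) : ℤ) := by
        push_cast; omega
      rw [this, zpow_natCast]
    · -- tail
      congr 1
      funext k
      rw [hf]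
      simp only
      congr 1
      have : ((m : ℤ) - (((k + m : ℕ) : ℤ) + 1)) = -(k + 1 : ℤ) := by push_cast; ring
      rw [this]

end Stmt12Aux

open Stmt12Aux in
/-- For `b = -n+i` with `n ≥ 3`, there is a constant `M` independent of `m`
such that any ball of diameter at most `|b|^{-m}·diam S` meets at most `M`
of the `m`-tiles. -/
theorem stmt12 (n : ℕ) (hn : 3 ≤ n) :
    ∃ M : ℕ, ∀ m : ℕ, 1 ≤ m → ∀ (x : ℂ) (ρ : ℝ),
      2 * ρ ≤ ‖-(n : ℂ) + Complex.I‖ ^ (-(m : ℤ)) * Metric.diam (Sset n) →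
      Nat.card {w : Fin m → ℕ | (∀ i, w i ≤ n ^ 2) ∧
        (tile n m w ∩ Metric.closedBall x ρ).Nonempty} ≤ M := by
  set D : ℝ := Metric.diam (Sset n) with hD
  have hD0 : 0 ≤ D := Metric.diam_nonneg
  set K : ℕ := (⌈3 * D⌉).toNat with hK
  refine ⟨(K + 1) ^ 2, ?_⟩
  intro m hm x ρ hρ
  have habs : 1 < ‖bc n‖ := one_lt_abs_bc n hn
  set A : ℝ := ‖bc n‖ with hA
  have hA0 : 0 < A := lt_trans one_pos habs
  have hApow : 0 < A ^ m := pow_pos hA0 m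
  have hρ' : 2 * ρ ≤ A ^ (-(m : ℤ)) * D := hρ
  set T : Set (Fin m → ℕ) := {w : Fin m → ℕ | (∀ i, w i ≤ n ^ 2) ∧
    (tile n m w ∩ Metric.closedBall x ρ).Nonempty} with hT
  set c : ℂ := bc n ^ m * x with hc
  set E : ℝ := 3 * D / 2 with hE
  -- key estimate
  have key : ∀ w ∈ T, ‖GaussianInt.toComplex (psi n w) - c‖ ≤ E := by
    rintro w ⟨hw, z, hzt, hzb⟩
    obtain ⟨s, hs, heq⟩ := tile_decomp n hn m w z hzt
    have hzx : ‖z - x‖ ≤ ρ := by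
      rw [← Complex.dist_eq]
      exact hzb
    have h1 : GaussianInt.toComplex (psi n w) - c = bc n ^ m * (z - x) - s := by
      rw [hc]; linear_combination -heq
    have h2 : ‖bc n ^ m * (z - x)‖ ≤ A ^ m * ρ := by
      rw [norm_mul, norm_pow, ← hA]
      exact mul_le_mul_of_nonneg_left hzx (le_of_lt hApow)
    have h3 : ‖s‖ ≤ D := abs_le_of_mem_Sset n hn hs
    have h4 : A ^ m * ρ ≤ D / 2 := by
      have h5 : A ^ (-(m : ℤ)) = (A ^ m)⁻¹ := by rw [zpow_neg, zpow_natCast]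
      have h6 : A ^ m * (2 * ρ) ≤ A ^ m * ((A ^ m)⁻¹ * D) := by
        rw [← h5]
        exact mul_le_mul_of_nonneg_left hρ' (le_of_lt hApow)
      rw [← mul_assoc (A ^ m) (A ^ m)⁻¹ D, mul_inv_cancel₀ (ne_of_gt hApow), one_mul] at h6
      nlinarith
    calc ‖GaussianInt.toComplex (psi n w) - c‖
        = ‖bc n ^ m * (z - x) - s‖ := by rw [h1]
      _ ≤ ‖bc n ^ m * (z - x)‖ + ‖s‖ := by
          simpa [sub_eq_add_neg] using norm_add_le (bc n ^ m * (z - x)) (-s)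
      _ ≤ A ^ m * ρ + D := add_le_add h2 h3
      _ ≤ D / 2 + D := by linarith
      _ ≤ E := by rw [hE]; linarith
  -- coordinates lie in integer intervals
  have tc_re : ∀ g : GaussianInt, (GaussianInt.toComplex g).re = (g.re : ℝ) := by
    intro g; rw [GaussianInt.toComplex_def]; simp
  have tc_im : ∀ g : GaussianInt, (GaussianInt.toComplex g).im = (g.im : ℝ) := by
    intro g; rw [GaussianInt.toComplex_def]; simp
  set P : Finset (ℤ × ℤ) :=
    Finset.Icc ⌈c.re - E⌉ ⌊c.re + E⌋ ×ˢ Finset.Icc ⌈c.im - E⌉ ⌊c.im + E⌋ with hP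
  set f : (Fin m → ℕ) → ℤ × ℤ := fun w => ((psi n w).re, (psi n w).im) with hf
  have hmem : ∀ w ∈ T, f w ∈ P := by
    intro w hw
    have h := key w hw
    have hre : |(GaussianInt.toComplex (psi n w) - c).re| ≤ E :=
      le_trans (Complex.abs_re_le_norm _) h
    have him : |(GaussianInt.toComplex (psi n w) - c).im| ≤ E :=
      le_trans (Complex.abs_im_le_norm _) h
    rw [Complex.sub_re, tc_re, abs_le] at hre
    rw [Complex.sub_im, tc_im, abs_le] at him
    rw [hP, Finset.mem_product, Finset.mem_Icc, Finset.mem_Icc]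
    refine ⟨⟨?_, ?_⟩, ?_, ?_⟩
    · rw [Int.ceil_le]; push_cast; linarith [hre.1]
    · rw [Int.le_floor]; push_cast; linarith [hre.2]
    · rw [Int.ceil_le]; push_cast; linarith [him.1]
    · rw [Int.le_floor]; push_cast; linarith [him.2]
  have hinj : Set.InjOn f T := by
    intro w hw w' hw' hfw
    refine psi_inj n hn m w w' hw.1 hw'.1 ?_
    rw [Zsqrtd.ext_iff]
    exact ⟨congrArg Prod.fst hfw, congrArg Prod.snd hfw⟩
  -- cardinality bound for each interval
  have hIcc : ∀ u : ℝ, (Finset.Icc ⌈u - E⌉ ⌊u + E⌋).card ≤ K + 1 := by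
    intro u
    rw [Int.card_Icc]
    have h1 : (⌊u + E⌋ : ℝ) ≤ u + E := Int.floor_le _
    have h2 : u - E ≤ (⌈u - E⌉ : ℝ) := Int.le_ceil _
    have h3 : ((⌊u + E⌋ - ⌈u - E⌉ : ℤ) : ℝ) ≤ 3 * D := by push_cast; rw [hE] at *; linarith
    have h4 : (3 : ℝ) * D ≤ (⌈3 * D⌉ : ℤ) := Int.le_ceil _
    have h5 : (⌊u + E⌋ - ⌈u - E⌉ : ℤ) ≤ ⌈3 * D⌉ := by exact_mod_cast le_trans h3 h4
    rw [hK]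
    omega
  calc Nat.card ↥T = T.ncard := Nat.card_coe_set_eq T
    _ = (f '' T).ncard := (Set.ncard_image_of_injOn hinj).symm
    _ ≤ (↑P : Set (ℤ × ℤ)).ncard := by
        refine Set.ncard_le_ncard ?_ P.finite_toSet
        rintro p ⟨w, hw, rfl⟩
        exact hmem w hw
    _ = P.card := Set.ncard_coe_finset P
    _ ≤ (K + 1) ^ 2 := by
        rw [hP, Finset.card_product, sq]
        exact Nat.mul_le_mul (hIcc c.re) (hIcc c.im)
end

section
/- Let R be a sub-semigroup-like set of finite words closed under taking factors arising from a subshift (i.e., if ρ₁ρ₂ ∈ R then ρ₁, ρ₂ ∈ R), let s ≥ 0, and let ρ_1,...,ρ_K ∈ R be such that every word in R of length at least N is divisible (as a prefix) by some ρ_k. If ∑_{k=1}^K c^{−s·len(ρ_k)} < 1 for some c > 1, then ∑_{ρ ∈ R} c^{−s·len(ρ)} < ∞; in particular, if additionally |R_m| c^{−sm} > 1 for all sufficiently large m (where R_m is the set of words of length m in R), a contradiction results, so ∑_{k=1}^K c^{−s·len(ρ_k)} ≥ 1. -/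
/-!
Let `b m` be the number of words of length `m` in `R` and `r = c ^ (-s)`. Once `m` exceeds `N`
and every `len ρₖ`, each word of length `m` is `ρₖ w'` with `w' ∈ R` of length `m - len ρₖ`, so
`b m ≤ ∑ₖ b (m - len ρₖ)`. Weighting by `r ^ m`, the partial sums `P n` of `b m r ^ m` satisfy
`P n ≤ P M + θ P n` with `θ = ∑ₖ r ^ len ρₖ`, hence stay bounded when `θ < 1`. Grouping the words
of `R` by length turns this into the first claim; the second follows because the terms of a
convergent series tend to `0` and so cannot stay above `1`.
-/

open Filter Finset

section RenewalInequality

variable {ι : Type*} [Fintype ι]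

theorem sum_Ico_comp_sub_le_sum_range {g : ℕ → ℝ} (hg : ∀ m, 0 ≤ g m) {ℓ M : ℕ} (hℓ : ℓ ≤ M)
    (n : ℕ) : ∑ m ∈ Ico M n, g (m - ℓ) ≤ ∑ m ∈ range n, g m := by
  rcases le_total n M with hnM | hMn
  · rw [Ico_eq_empty_of_le hnM, sum_empty]
    exact sum_nonneg fun m _ => hg m
  obtain ⟨a, rfl⟩ := Nat.exists_eq_add_of_le' hℓ
  obtain ⟨b, rfl⟩ := Nat.exists_eq_add_of_le' (hℓ.trans hMn)
  rw [sum_Ico_add_right_sub_eq]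
  exact sum_le_sum_of_subset_of_nonneg (fun m hm => by simp only [mem_Ico, mem_range] at hm ⊢; omega) fun m _ _ => hg m

theorem sum_range_le_of_le_sum_mul_comp_sub {g : ℕ → ℝ} (hg : ∀ m, 0 ≤ g m) {a : ι → ℝ}
    (ha : ∀ i, 0 ≤ a i) {ℓ : ι → ℕ} {M : ℕ} (hℓ : ∀ i, ℓ i ≤ M)
    (hrec : ∀ m, M ≤ m → g m ≤ ∑ i, a i * g (m - ℓ i)) (n : ℕ) :
    ∑ m ∈ range n, g m ≤ ∑ m ∈ range M, g m + (∑ i, a i) * ∑ m ∈ range n, g m := by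
  have htail : ∑ m ∈ Ico M n, g m ≤ (∑ i, a i) * ∑ m ∈ range n, g m :=
    calc ∑ m ∈ Ico M n, g m ≤ ∑ m ∈ Ico M n, ∑ i, a i * g (m - ℓ i) :=
          sum_le_sum fun m hm => hrec m (mem_Ico.1 hm).1
      _ = ∑ i, a i * ∑ m ∈ Ico M n, g (m - ℓ i) := by
          rw [sum_comm]; simp only [mul_sum]
      _ ≤ ∑ i, a i * ∑ m ∈ range n, g m :=
          sum_le_sum fun i _ =>
            mul_le_mul_of_nonneg_left (sum_Ico_comp_sub_le_sum_range hg (hℓ i) n) (ha i)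
      _ = (∑ i, a i) * ∑ m ∈ range n, g m := (sum_mul _ _ _).symm
  have hprod_nonneg : 0 ≤ (∑ i, a i) * ∑ m ∈ range n, g m :=
    mul_nonneg (sum_nonneg fun i _ => ha i) (sum_nonneg fun m _ => hg m)
  rcases le_total n M with hnM | hMn
  · linarith [sum_le_sum_of_subset_of_nonneg (f := g) (range_subset_range.2 hnM)
      fun m _ _ => hg m]
  · linarith [sum_range_add_sum_Ico g hMn]

theorem summable_of_eventually_le_sum_mul_comp_sub {g : ℕ → ℝ} (hg : ∀ m, 0 ≤ g m) {a : ι → ℝ}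
    (ha : ∀ i, 0 ≤ a i) {ℓ : ι → ℕ} (hrec : ∀ᶠ m in atTop, g m ≤ ∑ i, a i * g (m - ℓ i))
    (hθ : ∑ i, a i < 1) : Summable g := by
  obtain ⟨M₀, hM₀⟩ := eventually_atTop.1 hrec
  set M := M₀ + ∑ i, ℓ i
  have hℓ (i : ι) : ℓ i ≤ M := (single_le_sum (fun j _ => Nat.zero_le (ℓ j)) (mem_univ i)).trans
    (Nat.le_add_left _ _)
  refine summable_of_sum_range_le hg (c := (∑ m ∈ range M, g m) / (1 - ∑ i, a i)) fun n => ?_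
  have := sum_range_le_of_le_sum_mul_comp_sub hg ha hℓ (fun m hm => hM₀ m (by omega)) n
  rw [le_div_iff₀ (by linarith)]
  linarith

theorem summable_mul_pow_of_eventually_le_sum_comp_sub {b : ℕ → ℕ} {ℓ : ι → ℕ}
    (hrec : ∀ᶠ m in atTop, b m ≤ ∑ i, b (m - ℓ i)) {r : ℝ} (hr : 0 ≤ r)
    (hθ : ∑ i, r ^ ℓ i < 1) : Summable fun m => (b m : ℝ) * r ^ m := by
  refine summable_of_eventually_le_sum_mul_comp_sub (ℓ := ℓ) (fun m => by positivity)
    (fun i => pow_nonneg hr _) ?_ hθ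
  filter_upwards [hrec, eventually_all.2 fun i => eventually_ge_atTop (ℓ i)] with m hm hℓm
  calc (b m : ℝ) * r ^ m ≤ (∑ i, (b (m - ℓ i) : ℝ)) * r ^ m := by
        gcongr; exact_mod_cast hm
    _ = ∑ i, r ^ ℓ i * ((b (m - ℓ i) : ℝ) * r ^ (m - ℓ i)) := by
        rw [sum_mul]
        refine sum_congr rfl fun i _ => ?_
        rw [mul_left_comm, ← pow_add, Nat.add_sub_cancel' (hℓm i)]

end RenewalInequality

section Words

variable {A : Type*}

def wordsOfLength (R : Set (List A)) (m : ℕ) : Set (List A) := {w | w ∈ R ∧ w.length = m}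

theorem finite_wordsOfLength [Finite A] (R : Set (List A)) (m : ℕ) :
    (wordsOfLength R m).Finite :=
  (List.finite_length_eq A m).subset fun _ hw => hw.2

theorem summable_comp_length_iff [Finite A] (R : Set (List A)) {f : ℕ → ℝ} (hf : ∀ m, 0 ≤ f m) :
    Summable (fun w : R => f (w : List A).length) ↔
      Summable fun m => (Nat.card (wordsOfLength R m) : ℝ) * f m := by
  have sliceEquiv (m : ℕ) : {w : R | (w : List A).length = m} ≃ wordsOfLength R m :=
    Equiv.subtypeSubtypeEquivSubtypeInter (· ∈ R) (fun w => w.length = m)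
  have hfin (m : ℕ) : Finite {w : R | (w : List A).length = m} :=
    have := (finite_wordsOfLength R m).to_subtype
    .of_equiv _ (sliceEquiv m).symm
  rw [summable_partition (fun w => hf _) (s := fun m => {w : R | (w : List A).length = m})
    fun w => ⟨_, rfl, fun _ h => h.symm⟩, and_iff_right fun m => have := hfin m; Summable.of_finite]
  refine summable_congr fun m => ?_
  calc ∑' w : {w : R | (w : List A).length = m}, f (w : List A).length
      = ∑' _ : {w : R | (w : List A).length = m}, f m := tsum_congr fun w => by rw [w.2]
    _ = _ := by rw [tsum_const, nsmul_eq_mul, Nat.card_congr (sliceEquiv m)]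

variable {ι : Type*} {R : Set (List A)}

theorem wordsOfLength_subset_iUnion_append
    (hsuf : ∀ u v : List A, u ≠ [] → v ≠ [] → u ++ v ∈ R → v ∈ R)
    {ρ : ι → List A} (hρ : ∀ k, ρ k ≠ []) {N : ℕ}
    (hdiv : ∀ w ∈ R, N ≤ w.length → ∃ k, ρ k <+: w) {m : ℕ} (hNm : N ≤ m)
    (hρm : ∀ k, (ρ k).length < m) :
    wordsOfLength R m ⊆ ⋃ k, (ρ k ++ ·) '' wordsOfLength R (m - (ρ k).length) := by
  rintro w ⟨hwR, rfl⟩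
  obtain ⟨k, v, rfl⟩ := hdiv _ hwR hNm
  have hv : v ≠ [] := by
    rintro rfl
    simpa using hρm k
  refine Set.mem_iUnion.2 ⟨k, v, ⟨hsuf _ _ (hρ k) hv hwR, ?_⟩, rfl⟩
  simp

theorem eventually_card_wordsOfLength_le_sum [Finite A] [Fintype ι]
    (hsuf : ∀ u v : List A, u ≠ [] → v ≠ [] → u ++ v ∈ R → v ∈ R)
    {ρ : ι → List A} (hρ : ∀ k, ρ k ≠ []) {N : ℕ}
    (hdiv : ∀ w ∈ R, N ≤ w.length → ∃ k, ρ k <+: w) :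
    ∀ᶠ m in atTop,
      Nat.card (wordsOfLength R m) ≤ ∑ k, Nat.card (wordsOfLength R (m - (ρ k).length)) := by
  filter_upwards [eventually_ge_atTop N,
    eventually_all.2 fun k => eventually_gt_atTop (ρ k).length] with m hNm hρm
  simp only [Nat.card_coe_set_eq]
  calc (wordsOfLength R m).ncard
      ≤ (⋃ k ∈ univ, (ρ k ++ ·) '' wordsOfLength R (m - (ρ k).length)).ncard :=
        Set.ncard_le_ncard (by simpa using wordsOfLength_subset_iUnion_append hsuf hρ hdiv hNm hρm)
          (Set.finite_iUnion fun k => Set.finite_iUnion fun _ =>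
            (finite_wordsOfLength R _).image _)
    _ ≤ ∑ k, ((ρ k ++ ·) '' wordsOfLength R (m - (ρ k).length)).ncard :=
        set_ncard_biUnion_le _ _
    _ ≤ ∑ k, (wordsOfLength R (m - (ρ k).length)).ncard :=
        sum_le_sum fun k _ => Set.ncard_image_le (finite_wordsOfLength R _)

end Words

theorem stmt19_general (A : Type*) [Fintype A] (R : Set (List A))
    (hne : ∀ ρ ∈ R, ρ ≠ [])
    (hfac : ∀ ρ₁ ρ₂ : List A, ρ₁ ≠ [] → ρ₂ ≠ [] → ρ₁ ++ ρ₂ ∈ R → ρ₁ ∈ R ∧ ρ₂ ∈ R)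
    (s : ℝ) (c : ℝ) (hc : 1 < c)
    (K : ℕ) (ρ : Fin K → List A) (hρ : ∀ k, ρ k ∈ R) (N : ℕ)
    (hdiv : ∀ w ∈ R, N ≤ w.length → ∃ k : Fin K, (ρ k) <+: w) :
    ((∑ k : Fin K, c ^ (-(s * ((ρ k).length : ℝ))) < 1) →
      Summable (fun w : ↥R => c ^ (-(s * ((w : List A).length : ℝ))))) ∧
    ((∀ᶠ m : ℕ in atTop,
        1 < (Nat.card {w : List A | w ∈ R ∧ w.length = m} : ℝ) * c ^ (-(s * (m : ℝ)))) →
      1 ≤ ∑ k : Fin K, c ^ (-(s * ((ρ k).length : ℝ)))) := by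
  set r := c ^ (-s)
  have hr : 0 ≤ r := Real.rpow_nonneg (by linarith) _
  have hpow (n : ℕ) : c ^ (-(s * (n : ℝ))) = r ^ n := by
    rw [← neg_mul, Real.rpow_mul (by linarith), Real.rpow_natCast]
  simp only [hpow]
  have hsum : ∑ k, r ^ (ρ k).length < 1 →
      Summable fun m => (Nat.card (wordsOfLength R m) : ℝ) * r ^ m :=
    summable_mul_pow_of_eventually_le_sum_comp_sub (eventually_card_wordsOfLength_le_sum
      (fun u v hu hv h => (hfac u v hu hv h).2) (fun k => hne _ (hρ k)) hdiv) hr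
  refine ⟨fun hθ => (summable_comp_length_iff R fun m => pow_nonneg hr m).2 (hsum hθ), ?_⟩
  intro hlarge
  by_contra! hθ
  obtain ⟨m, hm_large, hm_small⟩ :=
    (hlarge.and ((hsum hθ).tendsto_atTop_zero.eventually_lt_const one_pos)).exists
  exact hm_large.not_gt hm_small

/-- Furstenberg's combinatorial lemma. Let `R` be the language of a subshift
over a finite alphabet (a factor-closed set of nonempty words), `s ≥ 0`,
`c > 1`, and `ρ₁,…,ρ_K ∈ R` such that every word of `R` of length ≥ `N` has
some `ρ_k` as a prefix. If `∑_k c^{-s·len(ρ_k)} < 1` then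
`∑_{ρ∈R} c^{-s·len(ρ)}` converges; and if moreover `|R_m|·c^{-sm} > 1` for
all sufficiently large `m`, then in fact `∑_k c^{-s·len(ρ_k)} ≥ 1`. -/
theorem stmt19 (A : Type*) [Fintype A] (R : Set (List A))
    (hne : ∀ ρ ∈ R, ρ ≠ [])
    (hfac : ∀ ρ₁ ρ₂ : List A, ρ₁ ≠ [] → ρ₂ ≠ [] → ρ₁ ++ ρ₂ ∈ R → ρ₁ ∈ R ∧ ρ₂ ∈ R)
    (s : ℝ) (hs : 0 ≤ s) (c : ℝ) (hc : 1 < c)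
    (K : ℕ) (ρ : Fin K → List A) (hρ : ∀ k, ρ k ∈ R) (N : ℕ)
    (hdiv : ∀ w ∈ R, N ≤ w.length → ∃ k : Fin K, (ρ k) <+: w) :
    ((∑ k : Fin K, c ^ (-(s * ((ρ k).length : ℝ))) < 1) →
      Summable (fun w : ↥R => c ^ (-(s * ((w : List A).length : ℝ))))) ∧
    ((∀ᶠ m : ℕ in atTop,
        1 < (Nat.card {w : List A | w ∈ R ∧ w.length = m} : ℝ) * c ^ (-(s * (m : ℝ)))) →
      1 ≤ ∑ k : Fin K, c ^ (-(s * ((ρ k).length : ℝ)))) :=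
  stmt19_general A R hne hfac s c hc K ρ hρ N hdiv
end
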